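/- arXiv:1610.02539 — 12 statements merged into one kernel-verified Lean document; each statement's English description precedes it below -/
import Mathlib

section
/- Let F be a field, n a positive integer, and d_1, ..., d_n nonnegative integers. Let f ∈ F[x_1,...,x_n] with deg(f) ≤ d_1 + ... + d_n. For arbitrary subsets C_1,...,C_n of F with |C_i| = d_i + 1, the coefficient of the monomial x_1^{d_1}···x_n^{d_n} in f equals the sum over all (c_1,...,c_n) ∈ C_1 × ··· × C_n of f(c_1,...,c_n) / (φ_1'(c_1)···φ_n'(c_n)), where φ_i(z) = ∏_{c ∈ C_i}(z - c) and φ_i' is its formal derivative. -/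
/-!
Both sides are linear in `f`, so it suffices to treat a monomial `x^α` with `|α| ≤ |d|`, for which
the right-hand side factors as `∏ i, ∑ c ∈ C i, c ^ α i / φᵢ'(c)`. The `i`-th factor is the
coefficient of `x^{d i}` in the Lagrange interpolant of `x^{α i}` on `C i`, i.e. `[α i = d i]`
whenever `α i ≤ d i`; and if `α ≠ d`, the degree bound forces `α i < d i` for some `i`.
-/

open Finset Polynomial

namespace Lagrange

variable {F ι : Type*} [Field F] [DecidableEq ι] {s : Finset ι} {v : ι → F}

theorem coeff_basis_card_sub_one (hvs : Set.InjOn v s) {i : ι} (hi : i ∈ s) :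
    (Lagrange.basis s v i).coeff (#s - 1) = (eval (v i) (derivative (nodal s v)))⁻¹ := by
  rw [← natDegree_basis hvs hi, coeff_natDegree, leadingCoeff_basis hvs hi, ← prod_inv_distrib,
    ← nodalWeight, nodalWeight_eq_eval_derivative_nodal hi]

theorem sum_eval_div_eval_derivative_nodal (hvs : Set.InjOn v s) {p : F[X]}
    (hp : p.degree < #s) :
    ∑ i ∈ s, p.eval (v i) / (derivative (nodal s v)).eval (v i) = p.coeff (#s - 1) := by
  conv_rhs => rw [eq_interpolate hvs hp, interpolate_apply, finsetSum_coeff]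
  refine sum_congr rfl fun i hi ↦ ?_
  rw [coeff_C_mul, coeff_basis_card_sub_one hvs hi, div_eq_mul_inv]

end Lagrange

theorem sum_pow_div_eval_derivative_prod_X_sub_C {F : Type*} [Field F] {s : Finset F} {d k : ℕ}
    (hs : #s = d + 1) (hk : k ≤ d) :
    ∑ c ∈ s, c ^ k / (derivative (∏ a ∈ s, (X - C a))).eval c = if k = d then 1 else 0 := by
  classical
  have hdeg : (X ^ k : F[X]).degree < #s := by
    rw [hs, degree_X_pow]
    exact_mod_cast Nat.lt_succ_of_le hk
  have := Lagrange.sum_eval_div_eval_derivative_nodal (Set.injOn_id _) hdeg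
  simp only [eval_pow, eval_X, hs, Nat.add_sub_cancel, coeff_X_pow, id] at this
  exact this.trans (by simp only [eq_comm])

theorem Finset.exists_lt_of_sum_le_of_ne {ι M : Type*} [Fintype ι] [AddCommMonoid M]
    [LinearOrder M] [IsOrderedCancelAddMonoid M] {f g : ι → M}
    (hle : ∑ i, f i ≤ ∑ i, g i) (hne : f ≠ g) : ∃ i, f i < g i := by
  by_contra! hge
  obtain ⟨j, hj⟩ := Function.ne_iff.mp hne
  exact (sum_lt_sum (fun i _ ↦ hge i) ⟨j, mem_univ j, (hge j).lt_of_ne' hj⟩).not_ge hle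

theorem prod_sum_pow_div_eval_derivative_prod_X_sub_C {σ F : Type*} [Fintype σ] [Field F]
    {s : σ → Finset F} {d : σ → ℕ} (hs : ∀ i, #(s i) = d i + 1) {α : σ → ℕ}
    (hα : ∑ i, α i ≤ ∑ i, d i) :
    ∏ i, ∑ c ∈ s i, c ^ α i / (derivative (∏ a ∈ s i, (X - C a))).eval c =
      if α = d then 1 else 0 := by
  split_ifs with h
  · subst h
    exact prod_eq_one fun i _ ↦ by
      rw [sum_pow_div_eval_derivative_prod_X_sub_C (hs i) le_rfl, if_pos rfl]
  · obtain ⟨i, hi⟩ := exists_lt_of_sum_le_of_ne hα h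
    exact prod_eq_zero (mem_univ i) <| by
      rw [sum_pow_div_eval_derivative_prod_X_sub_C (hs i) hi.le, if_neg hi.ne]

namespace MvPolynomial

variable {σ R : Type*} [Fintype σ]

theorem sum_le_totalDegree_of_mem_support [CommSemiring R] {f : MvPolynomial σ R}
    {α : σ →₀ ℕ} (hα : α ∈ f.support) : ∑ i, α i ≤ f.totalDegree := by
  rw [← Finsupp.degree_eq_sum]
  exact le_totalDegree hα

theorem sum_piFinset_eval_div_prod [DecidableEq σ] [Semifield R] (f : MvPolynomial σ R)
    (s : σ → Finset R) (w : σ → R → R) :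
    ∑ c ∈ Fintype.piFinset s, eval c f / ∏ i, w i (c i) =
      ∑ α ∈ f.support, f.coeff α * ∏ i, ∑ x ∈ s i, x ^ α i / w i x := by
  simp_rw [eval_eq', sum_div]
  rw [sum_comm]
  refine sum_congr rfl fun α _ ↦ ?_
  simp_rw [mul_div_assoc, ← mul_sum, ← prod_div_distrib, prod_univ_sum]

end MvPolynomial

theorem coefficient_formula_general {F : Type*} [Field F] (n : ℕ)
    (d : Fin n → ℕ) (f : MvPolynomial (Fin n) F)
    (hdeg : f.totalDegree ≤ ∑ i, d i)
    (C : Fin n → Finset F) (hC : ∀ i, (C i).card = d i + 1) :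
    f.coeff (Finsupp.equivFunOnFinite.symm d) =
      ∑ c ∈ Fintype.piFinset C,
        MvPolynomial.eval c f /
          ∏ i, Polynomial.eval (c i)
            (Polynomial.derivative (∏ a ∈ C i, (Polynomial.X - Polynomial.C a))) := by
  set δ := Finsupp.equivFunOnFinite.symm d
  calc f.coeff δ = ∑ α ∈ f.support, f.coeff α * if α = δ then 1 else 0 := by
        simp_rw [mul_boole, sum_ite_eq']
        split_ifs with hδ
        · rfl
        · exact MvPolynomial.notMem_support_iff.mp hδ
    _ = ∑ α ∈ f.support, f.coeff α *
          ∏ i, ∑ c ∈ C i, c ^ α i / (derivative (∏ a ∈ C i, (X - Polynomial.C a))).eval c := by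
        refine sum_congr rfl fun α hα ↦ ?_
        rw [prod_sum_pow_div_eval_derivative_prod_X_sub_C hC
          ((MvPolynomial.sum_le_totalDegree_of_mem_support hα).trans hdeg)]
        simp only [δ, Equiv.eq_symm_apply]
        rfl
    _ = _ := (MvPolynomial.sum_piFinset_eval_div_prod f C _).symm

theorem coefficient_formula {F : Type*} [Field F] (n : ℕ) (hn : 0 < n)
    (d : Fin n → ℕ) (f : MvPolynomial (Fin n) F)
    (hdeg : f.totalDegree ≤ ∑ i, d i)
    (C : Fin n → Finset F) (hC : ∀ i, (C i).card = d i + 1) :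
    f.coeff (Finsupp.equivFunOnFinite.symm d) =
      ∑ c ∈ Fintype.piFinset C,
        MvPolynomial.eval c f /
          ∏ i, Polynomial.eval (c i)
            (Polynomial.derivative (∏ a ∈ C i, (Polynomial.X - Polynomial.C a))) :=
  coefficient_formula_general n d f hdeg C hC
end

section
/- Let p be a prime, A ⊆ F_p with |A| = n, and 1 ≤ k ≤ n. Let A_k = { a_1 + ... + a_k : a_i ∈ A pairwise distinct }. Then |A_k| ≥ min{ k(n-k) + 1, p }. -/
/-!
The polynomial method of Alon, Nathanson and Ruzsa. Suppose the set `S` of `k`-fold restricted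
sums has `m ≤ k(n - k)` elements with `m < p`. Then
`f = ∏_{c ∈ S} (x₁ + ⋯ + x_k - c) · ∏_{i < j} (x_j - x_i)`
vanishes at every point of `A^k`: at a point with distinct coordinates the first factor vanishes,
otherwise the Vandermonde factor does. Expanding the top-degree part `(x₁ + ⋯ + x_k)^m` against
the Vandermonde determinant, the coefficient of `∏ x_i^{t_i}` with `∑ t_i = m + k(k-1)/2` is
`m! ∏_{i<j} (t_j - t_i) / ∏ t_i!`. Choosing the `t_i` strictly increasing and below `n ≤ p`
makes it nonzero in `𝔽_p`, so Alon's Combinatorial Nullstellensatz produces a point of `A^k`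
where `f` does not vanish, a contradiction.
-/

open Finset MvPolynomial
open scoped Nat

theorem Nat.prod_factorial_mul_multinomial_sub {ι : Type*} (s : Finset ι) {f g : ι → ℕ}
    (hgf : ∀ i ∈ s, g i ≤ f i) :
    (∏ i ∈ s, (f i)!) * Nat.multinomial s (fun i => f i - g i) =
      (∑ i ∈ s, (f i - g i))! * ∏ i ∈ s, (f i).descFactorial (g i) := by
  rw [← Nat.multinomial_spec, prod_congr rfl fun i hi =>
    (Nat.factorial_mul_descFactorial (hgf i hi)).symm, prod_mul_distrib]
  ring

theorem Nat.sum_range_min_sub_mul (d : ℕ) {k m : ℕ} (h : m ≤ k * d) :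
    ∑ j ∈ range k, min d (m - j * d) = m := by
  induction k generalizing m with
  | zero => simp_all
  | succ k ih =>
    have hstep : ∀ j, m - (j + 1) * d = m - d - j * d := fun j => by
      rw [Nat.sub_sub, add_mul, one_mul, add_comm]
    simp only [sum_range_succ', hstep, ih (m := m - d) (by rw [Nat.succ_mul] at h; omega)]
    omega

-- The excesses `t i - i` are filled from the top: the last `m / d` are `d`, one is `m % d`.
theorem exists_strictMono_sum_eq {k d m : ℕ} (h : m ≤ k * d) :
    ∃ t : Fin k → ℕ, StrictMono t ∧ (∀ i, t i ≤ i + d) ∧ ∑ i, t i = m + ∑ i : Fin k, (i : ℕ) := by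
  refine ⟨fun i => i + min d (m - (k - 1 - i) * d), fun i j hij => ?_, fun i => ?_, ?_⟩
  · have : (k - 1 - j) * d ≤ (k - 1 - i) * d := Nat.mul_le_mul_right _ (by omega)
    dsimp only
    have : min d (m - (k - 1 - i) * d) ≤ min d (m - (k - 1 - j) * d) := by gcongr
    omega
  · exact Nat.add_le_add_left (min_le_left _ _) _
  · rw [sum_add_distrib, add_comm,
      Fin.sum_univ_eq_sum_range (fun i => min d (m - (k - 1 - i) * d)),
      sum_range_reflect (fun j => min d (m - j * d)), Nat.sum_range_min_sub_mul d h]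

theorem Matrix.det_eq_sum_sign_smul_prod_apply {n R : Type*} [DecidableEq n] [Fintype n]
    [CommRing R] (M : Matrix n n R) :
    M.det = ∑ σ : Equiv.Perm n, Equiv.Perm.sign σ • ∏ i, M i (σ i) := by
  rw [← det_transpose, det_apply]
  rfl

theorem Matrix.det_descFactorial_eq_det_vandermonde {R : Type*} [CommRing R] {k : ℕ}
    (t : Fin k → ℕ) :
    (Matrix.of fun i j : Fin k => ((t i).descFactorial j : R)).det =
      (vandermonde fun i => (t i : R)).det := by
  have hℤ : (Matrix.of fun i j : Fin k => ((t i).descFactorial j : ℤ)).det =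
      (vandermonde fun i => (t i : ℤ)).det := by
    rw [det_eval_matrixOfPolynomials_eq_det_vandermonde _ (fun j => descPochhammer ℤ j)
      (fun j => descPochhammer_natDegree ℤ j) (fun j => monic_descPochhammer ℤ j)]
    simp only [descPochhammer_eval_eq_descFactorial]
  have := congrArg (Int.castRingHom R) hℤ
  simp only [RingHom.map_det] at this
  convert this using 2 <;> ext i j <;> simp [vandermonde_apply]

namespace MvPolynomial

variable {R : Type*} [CommRing R]

theorem det_vandermonde_X {k : ℕ} :
    (Matrix.vandermonde (X : Fin k → MvPolynomial (Fin k) R)).det =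
      ∑ σ : Equiv.Perm (Fin k),
        Equiv.Perm.sign σ • monomial (Finsupp.equivFunOnFinite.symm fun i => (σ i : ℕ)) 1 := by
  rw [Matrix.det_eq_sum_sign_smul_prod_apply]
  refine sum_congr rfl fun σ _ => ?_
  rw [monomial_eq, C_1, one_mul, Finsupp.prod_fintype _ _ fun _ => pow_zero _]
  rfl

theorem totalDegree_det_vandermonde_X_le {k : ℕ} :
    (Matrix.vandermonde (X : Fin k → MvPolynomial (Fin k) R)).det.totalDegree ≤
      ∑ i : Fin k, (i : ℕ) := by
  rw [det_vandermonde_X]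
  refine totalDegree_finsetSum_le fun σ _ => (totalDegree_smul_le _ _).trans ?_
  refine (totalDegree_monomial_le _ _).trans_eq ?_
  rw [Finsupp.sum_fintype _ _ fun _ => rfl]
  exact Equiv.sum_comp σ fun i : Fin k => (i : ℕ)

theorem totalDegree_aeval_le {σ : Type*} (L : MvPolynomial σ R) (P : Polynomial R) :
    (Polynomial.aeval L P).totalDegree ≤ P.natDegree * L.totalDegree := by
  rw [Polynomial.aeval_eq_sum_range]
  refine totalDegree_finsetSum_le fun i hi => ?_
  calc (P.coeff i • L ^ i).totalDegree ≤ (L ^ i).totalDegree := totalDegree_smul_le _ _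
    _ ≤ i * L.totalDegree := totalDegree_pow _ _
    _ ≤ P.natDegree * L.totalDegree :=
      Nat.mul_le_mul_right _ (Nat.lt_succ_iff.mp (mem_range.mp hi))

theorem prod_factorial_mul_coeff_sum_X_pow_mul_monomial {σ : Type*} [Fintype σ] {m : ℕ}
    {t e : σ →₀ ℕ} (hte : t.degree = m + e.degree) :
    (∏ i, ((t i)! : R)) * coeff t ((∑ i, X i) ^ m * monomial e 1) =
      m ! * ∏ i, ((t i).descFactorial (e i) : R) := by
  rw [coeff_mul_monomial']
  by_cases het : e ≤ t
  · have hsum : ∑ i, (t i - e i) = m := by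
      rw [sum_tsub_distrib _ fun i _ => het i, ← Finsupp.degree_eq_sum, ← Finsupp.degree_eq_sum,
        hte, Nat.add_sub_cancel]
    have hmult : (t - e).multinomial = Nat.multinomial univ fun i => t i - e i :=
      (Finsupp.multinomial_of_support_subset (subset_univ _)).symm
    have key := Nat.prod_factorial_mul_multinomial_sub univ fun i _ => het i
    rw [hsum] at key
    rw [if_pos het, mul_one, coeff_sum_X_pow_of_fintype, Finsupp.sum_fintype _ _ fun _ => rfl]
    simp only [Finsupp.coe_tsub, Pi.sub_apply, hsum, if_true, hmult]
    exact_mod_cast congrArg (Nat.cast : ℕ → R) key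
  · obtain ⟨i, hi⟩ : ∃ i, t i < e i := by simpa [Finsupp.le_def] using het
    rw [if_neg het, mul_zero, prod_eq_zero (mem_univ i), mul_zero]
    rw [Nat.descFactorial_eq_zero_iff_lt.mpr hi, Nat.cast_zero]

theorem prod_factorial_mul_coeff_sum_X_pow_mul_det_vandermonde {k m : ℕ} {t : Fin k →₀ ℕ}
    (ht : t.degree = m + ∑ i : Fin k, (i : ℕ)) :
    (∏ i, ((t i)! : R)) * coeff t ((∑ i, X i) ^ m * (Matrix.vandermonde X).det) =
      m ! * (Matrix.vandermonde fun i => (t i : R)).det := by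
  rw [det_vandermonde_X, ← Matrix.det_descFactorial_eq_det_vandermonde,
    Matrix.det_eq_sum_sign_smul_prod_apply, mul_sum, coeff_sum, mul_sum, mul_sum]
  refine sum_congr rfl fun σ _ => ?_
  rw [mul_smul_comm, coeff_smul, mul_smul_comm, mul_smul_comm,
    prod_factorial_mul_coeff_sum_X_pow_mul_monomial]
  · rfl
  · rw [ht, Finsupp.degree_eq_sum]
    exact congrArg (m + ·) (Equiv.sum_comp σ fun i : Fin k => (i : ℕ)).symm

theorem coeff_aeval_mul_eq_coeff_pow_mul {σ : Type*} {P : Polynomial R} (hP : P.Monic)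
    {L V : MvPolynomial σ R} (hL : L.totalDegree ≤ 1) {D : ℕ} (hV : V.totalDegree ≤ D)
    {t : σ →₀ ℕ} (ht : t.degree = P.natDegree + D) :
    coeff t (Polynomial.aeval L P * V) = coeff t (L ^ P.natDegree * V) := by
  conv_lhs => rw [← P.eraseLead_add_C_mul_X_pow]
  rw [map_add, add_mul, coeff_add, hP.leadingCoeff, map_one, one_mul, map_pow,
    Polynomial.aeval_X, add_eq_right]
  rcases P.eraseLead_natDegree_lt_or_eraseLead_eq_zero with hlt | hzero
  · apply coeff_eq_zero_of_totalDegree_lt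
    calc (Polynomial.aeval L P.eraseLead * V).totalDegree
        ≤ P.eraseLead.natDegree * L.totalDegree + V.totalDegree :=
          (totalDegree_mul _ _).trans (add_le_add_left (totalDegree_aeval_le _ _) _)
      _ < t.degree := by rw [ht]; nlinarith
  · rw [hzero, map_zero, zero_mul, coeff_zero]

end MvPolynomial

theorem Finset.sum_mem_image_powersetCard {α : Type*} [AddCommMonoid α] [DecidableEq α]
    {A : Finset α} {k : ℕ} {s : Fin k → α} (hs : Function.Injective s) (hsA : ∀ i, s i ∈ A) :
    ∑ i, s i ∈ (A.powersetCard k).image fun B => ∑ x ∈ B, x := by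
  refine mem_image.mpr ⟨univ.map ⟨s, hs⟩, mem_powersetCard.mpr ⟨?_, by simp⟩, sum_map _ _ _⟩
  simpa [subset_iff] using hsA

theorem exists_injective_sum_notMem {F : Type*} [Field F] (A C : Finset F) {k : ℕ}
    (t : Fin k → ℕ) (htA : ∀ i, t i < #A) (ht : ∑ i, t i = #C + ∑ i : Fin k, (i : ℕ))
    (hC : ((#C)! : F) ≠ 0) (ht_inj : Function.Injective fun i => (t i : F)) :
    ∃ s : Fin k → F, Function.Injective s ∧ (∀ i, s i ∈ A) ∧ ∑ i, s i ∉ C := by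
  set T : Fin k →₀ ℕ := Finsupp.equivFunOnFinite.symm t
  set L : MvPolynomial (Fin k) F := ∑ i, X i
  set P : Polynomial F := ∏ c ∈ C, (Polynomial.X - Polynomial.C c)
  set V : MvPolynomial (Fin k) F := (Matrix.vandermonde X).det
  have hP : P.Monic := Polynomial.monic_prod_of_monic _ _ fun c _ => Polynomial.monic_X_sub_C c
  have hPdeg : P.natDegree = #C := by simp [P]
  have hT : T.degree = P.natDegree + ∑ i : Fin k, (i : ℕ) := by
    rw [Finsupp.degree_eq_sum, hPdeg]; exact ht
  have hL : L.totalDegree ≤ 1 := totalDegree_finsetSum_le fun i _ => (totalDegree_X i).le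
  have hcoeff : coeff T (Polynomial.aeval L P * V) ≠ 0 := by
    rw [coeff_aeval_mul_eq_coeff_pow_mul hP hL totalDegree_det_vandermonde_X_le hT, hPdeg]
    intro h0
    have := prod_factorial_mul_coeff_sum_X_pow_mul_det_vandermonde (R := F) (hPdeg ▸ hT)
    rw [h0, mul_zero] at this
    exact mul_ne_zero hC (Matrix.det_vandermonde_ne_zero_iff.mpr ht_inj) this.symm
  have hdeg : (Polynomial.aeval L P * V).totalDegree = T.degree := by
    refine le_antisymm ?_ (le_totalDegree (mem_support_iff.mpr hcoeff))
    calc (Polynomial.aeval L P * V).totalDegree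
        ≤ P.natDegree * L.totalDegree + V.totalDegree :=
          (totalDegree_mul _ _).trans (add_le_add_left (totalDegree_aeval_le _ _) _)
      _ ≤ T.degree := by
          rw [hT]
          gcongr
          exacts [mul_le_of_le_one_right (Nat.zero_le _) hL, totalDegree_det_vandermonde_X_le]
  obtain ⟨s, hsA, hs⟩ := combinatorial_nullstellensatz_exists_eval_nonzero _ T hcoeff hdeg
    (fun _ => A) htA
  have heval : eval s (Polynomial.aeval L P * V) =
      P.eval (∑ i, s i) * (Matrix.vandermonde s).det := by
    simp [L, P, V, Polynomial.eval_prod, RingHom.map_det, Matrix.vandermonde, Matrix.map]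
  rw [heval, mul_ne_zero_iff] at hs
  refine ⟨s, Matrix.det_vandermonde_ne_zero_iff.mp hs.2, hsA, fun hsC => hs.1 ?_⟩
  simp only [P, Polynomial.eval_prod, Polynomial.eval_sub, Polynomial.eval_X, Polynomial.eval_C]
  exact prod_eq_zero hsC (sub_self _)

theorem dias_da_silva_hamidoune_general (p : ℕ) (hp : p.Prime) (n k : ℕ)
    (A : Finset (ZMod p)) (hA : A.card = n) (hkn : k ≤ n) :
    min (k * (n - k) + 1) p ≤
      ((A.powersetCard k).image (fun B => ∑ x ∈ B, x)).card := by
  have := Fact.mk hp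
  set S := (A.powersetCard k).image fun B => ∑ x ∈ B, x
  by_contra! hS
  have hnp : n ≤ p := by simpa [hA] using A.card_le_univ
  obtain ⟨t, ht_mono, ht_le, ht_sum⟩ :=
    exists_strictMono_sum_eq (k := k) (d := n - k) (m := #S)
      (by have := hS.trans_le (min_le_left _ _); omega)
  have ht_lt : ∀ i, t i < n := fun i => by have := ht_le i; omega
  have hfact : ((#S)! : ZMod p) ≠ 0 := by
    rw [Ne, ZMod.natCast_eq_zero_iff, hp.dvd_factorial]
    exact (hS.trans_le (min_le_right _ _)).not_ge
  have ht_inj : Function.Injective fun i => (t i : ZMod p) := fun i j hij => ht_mono.injective <| by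
    simpa [ZMod.natCast_eq_natCast_iff', Nat.mod_eq_of_lt ((ht_lt _).trans_le hnp)] using hij
  obtain ⟨s, hs, hsA, hsS⟩ :=
    exists_injective_sum_notMem A S t (hA ▸ ht_lt) ht_sum hfact ht_inj
  exact hsS (sum_mem_image_powersetCard hs hsA)

theorem dias_da_silva_hamidoune (p : ℕ) (hp : p.Prime) (n k : ℕ)
    (A : Finset (ZMod p)) (hA : A.card = n) (hk : 1 ≤ k) (hkn : k ≤ n) :
    min (k * (n - k) + 1) p ≤
      ((A.powersetCard k).image (fun B => ∑ x ∈ B, x)).card :=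
  dias_da_silva_hamidoune_general p hp n k A hA hkn
end

section
/- For integers 1 ≤ k ≤ n, the degree of the Plücker embedding of the Grassmannian Gr_k(C^n), given by the formula (k(n-k))! · ∏_{i=1}^{k} (i-1)!/(n-i)!, is a positive integer. -/
/-!
Put `m = n - k`. Since `(n - 1 - i)!` runs over `(m + i)!` for `i < k`, the claim is that
`∏_{i<k} (m + i)!` divides `(k m)! ∏_{i<k} i!`. The second product is the determinant of the
`k × k` matrix of falling factorials `(m + i)_j`, a Vandermonde determinant in disguise. Expanding
it by the Leibniz formula, the term of `σ` is `∏_i (m + σ i)_i`, and `(k m)!` times it is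
a multiple of `∏_i (m + σ i)! = ∏_i (m + i)!`, the quotient being the multinomial coefficient with
parts `m + σ i - i`, which add up to `k m`.
-/

open Finset Nat Equiv

theorem Nat.prod_factorial_dvd_factorial_sum_sub_mul_prod_descFactorial {ι : Type*}
    (s : Finset ι) (a b : ι → ℕ) (h : ∀ i ∈ s, b i ≤ a i) :
    ∏ i ∈ s, (a i)! ∣ (∑ i ∈ s, (a i - b i))! * ∏ i ∈ s, (a i).descFactorial (b i) := by
  rw [prod_congr rfl fun i hi => (factorial_mul_descFactorial (h i hi)).symm,
    prod_mul_distrib]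
  exact mul_dvd_mul_right (prod_factorial_dvd_factorial_sum s _) _

theorem Equiv.Perm.sum_add_apply_sub {ι : Type*} [Fintype ι] (σ : Perm ι) (f : ι → ℕ) (m : ℕ)
    (h : ∀ i, f i ≤ m + f (σ i)) :
    ∑ i, (m + f (σ i) - f i) = Fintype.card ι * m := by
  have key : ∑ i, (m + f (σ i) - f i) + ∑ i, f i = Fintype.card ι * m + ∑ i, f i := by
    rw [← sum_add_distrib, sum_congr rfl fun i _ => Nat.sub_add_cancel (h i),
      sum_add_distrib, Equiv.sum_comp σ f, sum_const, Finset.card_univ, smul_eq_mul]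
  exact Nat.add_right_cancel key

theorem prod_factorial_dvd_factorial_mul_prod_descFactorial_perm {k : ℕ} (σ : Perm (Fin k))
    (m : ℕ) :
    ∏ i : Fin k, (m + i)! ∣ (k * m)! * ∏ i : Fin k, (m + σ i).descFactorial i := by
  by_cases h : ∀ i : Fin k, (i : ℕ) ≤ m + σ i
  · have hsum := σ.sum_add_apply_sub (fun i => (i : ℕ)) m h
    rw [Fintype.card_fin] at hsum
    rw [← hsum, ← Equiv.prod_comp σ (fun i : Fin k => (m + i)!)]
    exact prod_factorial_dvd_factorial_sum_sub_mul_prod_descFactorial _ _ _ fun i _ => h i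
  · push Not at h
    obtain ⟨i, hi⟩ := h
    have hzero : ∏ i : Fin k, (m + σ i).descFactorial i = 0 :=
      prod_eq_zero (mem_univ i) (descFactorial_eq_zero_iff_lt.mpr hi)
    rw [hzero, mul_zero]
    exact dvd_zero _

theorem det_descFactorial_eq_prod_factorial (k m : ℕ) :
    (Matrix.of fun i j : Fin k => ((m + i).descFactorial j : ℤ)).det =
      ∏ i ∈ range k, (i ! : ℤ) := by
  cases k with
  | zero => simp
  | succ k =>
    have hvdm := Matrix.det_eval_matrixOfPolynomials_eq_det_vandermonde
      (fun i : Fin (k + 1) => (i : ℤ) + m) (fun j => descPochhammer ℤ j)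
      (fun j => descPochhammer_natDegree ℤ j) (fun j => monic_descPochhammer ℤ j)
    rw [Matrix.det_vandermonde_add, Matrix.det_vandermonde_id_eq_superFactorial] at hvdm
    have hentry : ∀ i j : Fin (k + 1),
        ((m + i).descFactorial j : ℤ) = (descPochhammer ℤ j).eval ((i : ℤ) + m) := by
      intro i j
      rw [← descPochhammer_eval_eq_descFactorial, Nat.cast_add, add_comm]
    simp_rw [hentry, ← hvdm, ← Nat.cast_prod, prod_range_succ_factorial]

theorem prod_factorial_add_dvd_factorial_mul_prod_factorial (k m : ℕ) :
    ∏ i ∈ range k, (m + i)! ∣ (k * m)! * ∏ i ∈ range k, i ! := by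
  rw [← Int.natCast_dvd_natCast]
  push_cast
  rw [← det_descFactorial_eq_prod_factorial k m, Matrix.det_apply, mul_sum,
    ← Fin.prod_univ_eq_prod_range (fun i => ((m + i)! : ℤ))]
  refine dvd_sum fun σ _ => ?_
  rw [Units.smul_def, zsmul_eq_mul, mul_left_comm]
  refine dvd_mul_of_dvd_right ?_ _
  simp only [Matrix.of_apply]
  exact_mod_cast prod_factorial_dvd_factorial_mul_prod_descFactorial_perm σ m

theorem grassmannian_degree_pos_int_general (n k : ℕ) (hkn : k ≤ n) :
    ∃ m : ℕ, 0 < m ∧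
      (m : ℚ) = (Nat.factorial (k * (n - k)) : ℚ) *
        ∏ i ∈ Finset.range k,
          (Nat.factorial i : ℚ) / (Nat.factorial (n - 1 - i) : ℚ) := by
  obtain ⟨q, hq⟩ := prod_factorial_add_dvd_factorial_mul_prod_factorial k (n - k)
  have hden : ∏ i ∈ range k, ((n - 1 - i)! : ℚ) = ∏ i ∈ range k, ((n - k + i)! : ℚ) := by
    rw [← prod_range_reflect _ k]
    refine prod_congr rfl fun i hi => ?_
    rw [mem_range] at hi
    congr 2
    omega
  have hpos : 0 < (∏ i ∈ range k, (n - k + i)!) * q := hq ▸ by positivity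
  refine ⟨q, Nat.pos_of_mul_pos_left hpos, ?_⟩
  rw [prod_div_distrib, hden, ← mul_div_assoc, eq_div_iff (by positivity)]
  exact_mod_cast (hq.trans (mul_comm _ _)).symm

theorem grassmannian_degree_pos_int (n k : ℕ) (hk : 1 ≤ k) (hkn : k ≤ n) :
    ∃ m : ℕ, 0 < m ∧
      (m : ℚ) = (Nat.factorial (k * (n - k)) : ℚ) *
        ∏ i ∈ Finset.range k,
          (Nat.factorial i : ℚ) / (Nat.factorial (n - 1 - i) : ℚ) :=
  grassmannian_degree_pos_int_general n k hkn
end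

section
/- Let F be a field (or any integral domain) and let x_1,...,x_r, y_1,...,y_s be pairwise distinct elements (x_i distinct among themselves, y_j distinct among themselves). Let M be any multiset of r + s - 2 elements of F. Then binom(r+s-2, r-1)·1_F = Σ_{i=1}^{r} Σ_{j=1}^{s} [ ∏_{m ∈ M}(x_i + y_j - m) ] / [ ∏_{k ≠ i}(x_i - x_k) · ∏_{l ≠ j}(y_j - y_l) ]. -/
/-!
Put `Q = ∏_{m ∈ M} (X - m)`, monic of degree `n = (r - 1) + (s - 1)`; the summand is `Q(x_i + y_j)`
divided by the two Lagrange weights. Expanding `Q(x + y)` into monomials `x^a y^b` with `a + b ≤ n`,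
the double sum factors into products of the one-variable sums `∑_i x_i^a / ∏_{k ≠ i} (x_i - x_k)`.
Such a sum is the coefficient of `X^(r-1)` in the Lagrange interpolant of `X^a` at the `x_i`, so it
is `1` for `a = r - 1` and `0` for `a < r - 1`. As `a + b ≤ n`, only the monomial `x^(r-1) y^(s-1)`
of `(x + y)^n` survives, with coefficient `binom(n, r - 1)`.
-/

open Finset Polynomial

section DividedDifferences

variable {F ι κ : Type*} [Field F] [DecidableEq ι] [DecidableEq κ]
  {s : Finset ι} {t : Finset κ} {v : ι → F} {w : κ → F}

theorem Lagrange.sum_pow_div_prod_sub (hvs : Set.InjOn v s) {d : ℕ} (hd : d < #s) :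
    ∑ i ∈ s, v i ^ d / ∏ i' ∈ s.erase i, (v i - v i') = if d = #s - 1 then 1 else 0 := by
  have hcoeff := Lagrange.coeff_eq_sum hvs (P := X ^ d) (by rw [degree_X_pow]; exact_mod_cast hd)
  simp only [eval_pow, eval_X, coeff_X_pow] at hcoeff
  rw [← hcoeff]
  exact if_congr eq_comm rfl rfl

theorem Lagrange.sum_pow_div_prod_sub_mul_sum_pow_div_prod_sub
    (hvs : Set.InjOn v s) (hwt : Set.InjOn w t) (hs : s.Nonempty) (ht : t.Nonempty)
    {a b : ℕ} (hab : a + b ≤ (#s - 1) + (#t - 1)) :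
    (∑ i ∈ s, v i ^ a / ∏ i' ∈ s.erase i, (v i - v i')) *
        (∑ j ∈ t, w j ^ b / ∏ j' ∈ t.erase j, (w j - w j')) =
      if a = #s - 1 ∧ b = #t - 1 then 1 else 0 := by
  have hs_pos := hs.card_pos
  have ht_pos := ht.card_pos
  by_cases ha : a < #s - 1
  · rw [sum_pow_div_prod_sub hvs (by omega), if_neg (by omega), if_neg (by omega), zero_mul]
  by_cases hb : b < #t - 1
  · rw [sum_pow_div_prod_sub hwt (by omega), if_neg (by omega), if_neg (by omega), mul_zero]
  rw [sum_pow_div_prod_sub hvs (by omega), sum_pow_div_prod_sub hwt (by omega),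
    if_pos (by omega), if_pos (by omega), if_pos (by omega), mul_one]

theorem Lagrange.sum_sum_add_pow_div_prod_sub
    (hvs : Set.InjOn v s) (hwt : Set.InjOn w t) (hs : s.Nonempty) (ht : t.Nonempty)
    {k : ℕ} (hk : k ≤ (#s - 1) + (#t - 1)) :
    ∑ i ∈ s, ∑ j ∈ t, (v i + w j) ^ k /
        ((∏ i' ∈ s.erase i, (v i - v i')) * ∏ j' ∈ t.erase j, (w j - w j')) =
      if k = (#s - 1) + (#t - 1) then (k.choose (#s - 1) : F) else 0 := by
  calc _ = ∑ p ∈ antidiagonal k, (k.choose p.1 : F) *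
          ((∑ i ∈ s, v i ^ p.1 / ∏ i' ∈ s.erase i, (v i - v i')) *
            (∑ j ∈ t, w j ^ p.2 / ∏ j' ∈ t.erase j, (w j - w j'))) := by
        have hbin (a b : F) := (Commute.all a b).add_pow' k
        simp_rw [hbin, sum_div, sum_mul_sum, mul_sum, nsmul_eq_mul]
        refine (sum_congr rfl fun i _ => sum_comm).trans (sum_comm.trans ?_)
        refine sum_congr rfl fun p _ => sum_congr rfl fun i _ => sum_congr rfl fun j _ => ?_
        ring
    _ = ∑ p ∈ antidiagonal k, (k.choose p.1 : F) * if p = (#s - 1, #t - 1) then 1 else 0 := by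
        refine sum_congr rfl fun p hp => ?_
        rw [sum_pow_div_prod_sub_mul_sum_pow_div_prod_sub hvs hwt hs ht
          ((HasAntidiagonal.mem_antidiagonal.mp hp).trans_le hk)]
        simp only [Prod.ext_iff]
    _ = _ := by
        simp only [mul_ite, mul_one, mul_zero, sum_ite_eq', HasAntidiagonal.mem_antidiagonal]
        exact if_congr eq_comm rfl rfl

theorem Lagrange.sum_sum_eval_add_div_prod_sub
    (hvs : Set.InjOn v s) (hwt : Set.InjOn w t) (hs : s.Nonempty) (ht : t.Nonempty)
    {Q : F[X]} (hQ : Q.natDegree ≤ (#s - 1) + (#t - 1)) :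
    ∑ i ∈ s, ∑ j ∈ t, Q.eval (v i + w j) /
        ((∏ i' ∈ s.erase i, (v i - v i')) * ∏ j' ∈ t.erase j, (w j - w j')) =
      Q.coeff ((#s - 1) + (#t - 1)) * ((#s - 1) + (#t - 1)).choose (#s - 1) := by
  set n := (#s - 1) + (#t - 1)
  calc _ = ∑ k ∈ range (n + 1), Q.coeff k * ∑ i ∈ s, ∑ j ∈ t, (v i + w j) ^ k /
          ((∏ i' ∈ s.erase i, (v i - v i')) * ∏ j' ∈ t.erase j, (w j - w j')) := by
        simp_rw [eval_eq_sum_range' (Nat.lt_succ_of_le hQ), sum_div, mul_sum, mul_div_assoc]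
        refine (sum_congr rfl fun i _ => sum_comm).trans sum_comm
    _ = ∑ k ∈ range (n + 1), Q.coeff k * if k = n then (k.choose (#s - 1) : F) else 0 := by
        refine sum_congr rfl fun k hk => ?_
        rw [sum_sum_add_pow_div_prod_sub hvs hwt hs ht (Nat.le_of_lt_succ (mem_range.mp hk))]
    _ = _ := by
        simp only [mul_ite, mul_zero, sum_ite_eq', mem_range, Nat.lt_succ_self, if_true]

end DividedDifferences

theorem segre_localization_identity {F : Type*} [Field F] (r s : ℕ)
    (hr : 1 ≤ r) (hs : 1 ≤ s)
    (x : Fin r → F) (y : Fin s → F)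
    (hx : Function.Injective x) (hy : Function.Injective y)
    (M : Multiset F) (hM : Multiset.card M = r + s - 2) :
    ((r + s - 2).choose (r - 1) : F) =
      ∑ i : Fin r, ∑ j : Fin s,
        (M.map (fun m => x i + y j - m)).prod /
          ((∏ k ∈ Finset.univ.erase i, (x i - x k)) *
           (∏ l ∈ Finset.univ.erase j, (y j - y l))) := by
  set Q : F[X] := (M.map fun m => X - C m).prod
  have hQ_eval (u : F) : (M.map fun m => u - m).prod = Q.eval u := by
    simp [Q, eval_multiset_prod, Multiset.map_map]
  have hQ_monic : Q.Monic := monic_multiset_prod_of_monic _ _ fun m _ => monic_X_sub_C m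
  have hQ_deg : Q.natDegree = (r - 1) + (s - 1) := by
    rw [natDegree_multiset_prod_X_sub_C_eq_card, hM]
    omega
  have hsum := Lagrange.sum_sum_eval_add_div_prod_sub hx.injOn hy.injOn
    ⟨⟨0, hr⟩, mem_univ _⟩ ⟨⟨0, hs⟩, mem_univ _⟩ (Q := Q) (by simpa using hQ_deg.le)
  simp only [card_univ, Fintype.card_fin, ← hQ_deg, hQ_monic.coeff_natDegree, one_mul] at hsum
  simp_rw [hQ_eval, hsum, hQ_deg]
  congr 2
  omega
end

section
/- Let F be a field, 1 ≤ k ≤ n, and x_1,...,x_n pairwise distinct elements of F. Let M be any multiset of k(n-k) elements of F. Then (k(n-k))! · ∏_{i=1}^{k} (i-1)!/(n-i)! (as an element of F via the canonical map from Z, the quotient being an integer) equals Σ_{J} [∏_{m ∈ M}(x_J - m)] / [∏_{i ∈ J} ∏_{j ∉ J}(x_i - x_j)], where the sum runs over all k-element subsets J of {1,...,n} and x_J = Σ_{i ∈ J} x_i. -/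
/-!
Work in `ℤ[X₀, …, X_{n-1}]`. Each tangent weight `e_J = ∏_{i ∈ J, j ∉ J} (X i - X j)` divides
the Vandermonde determinant `V`, because its factors are pairwise non-associate primes each
dividing `V`. Hence `A_d = V · ∑_J (∑_{i ∈ J} X i) ^ d / e_J` is a polynomial. A transposition of
the variables negates `V` and permutes the `e_J`, so it negates `A_d`; thus `A_d` is divisible by
every `X a - X b` and hence by `V`. As `A_d` is homogeneous of degree `d + deg V - k(n-k)`, the
quotient `A_d / V` vanishes for `d < k(n-k)` and is an integer constant `c` for `d = k(n-k)`.
Expanding the monic polynomial `∏_{m ∈ M} (t - m)` of degree `k(n-k)` shows that the sum equals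
`c`, for every field, every injective `x` and every `M`.

To find `c`, take `x i = i` over `ℚ`. The largest value `T` of `x_J` is attained only at the top
fixed point `J = {n-k, …, n-1}`, and the smallest is `T - k(n-k)`; with `M = {T-1, …, T-k(n-k)}`
all terms except the top one vanish, and the top one is `(k(n-k))! / ∏_{r<k} (n-k+r)!/r!`.
-/

open MvPolynomial Finset
open scoped Nat

namespace GrassmannianLocalization

theorem prod_dvd_of_prime_of_pairwise_not_dvd {ι M : Type*} [CommMonoidWithZero M]
    {s : Finset ι} {f : ι → M} {p : M} (hf : ∀ i ∈ s, Prime (f i))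
    (hs : (s : Set ι).Pairwise fun i j => ¬f i ∣ f j) (h : ∀ i ∈ s, f i ∣ p) :
    ∏ i ∈ s, f i ∣ p := by
  classical
  induction s using Finset.induction_on with
  | empty => simp
  | insert a s ha ih =>
    rw [coe_insert, Set.pairwise_insert] at hs
    obtain ⟨q, rfl⟩ := ih (fun i hi => hf i (mem_insert_of_mem hi)) hs.1
      (fun i hi => h i (mem_insert_of_mem hi))
    have hfa := hf a (mem_insert_self a s)
    have hnd : ¬f a ∣ ∏ i ∈ s, f i := fun hd => by
      obtain ⟨i, hi, hai⟩ := (hfa.dvd_finsetProd_iff _).mp hd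
      exact (hs.2 i hi (ne_of_mem_of_not_mem hi ha).symm).1 hai
    obtain ⟨r, rfl⟩ := (hfa.dvd_or_dvd (h a (mem_insert_self a s))).resolve_left hnd
    exact ⟨r, by rw [prod_insert ha]; ac_rfl⟩

theorem sum_lt_sum_of_card_eq {α : Type*} [DecidableEq α] {s t : Finset α} (f : α → ℕ) (m : ℕ)
    (hst : #s = #t) (hne : s ≠ t) (hs : ∀ i ∈ s \ t, f i < m) (ht : ∀ j ∈ t \ s, m ≤ f j) :
    ∑ i ∈ s, f i < ∑ j ∈ t, f j := by
  have hst' : (s \ t).Nonempty :=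
    sdiff_nonempty.mpr fun hsub => hne (eq_of_subset_of_card_le hsub hst.ge)
  rw [← sum_inter_add_sum_sdiff s t, ← sum_inter_add_sum_sdiff t s, inter_comm]
  gcongr ?_ + ?_
  calc ∑ i ∈ s \ t, f i < ∑ i ∈ s \ t, m := sum_lt_sum_of_nonempty hst' hs
    _ = #(t \ s) • m := by rw [sum_const, card_sdiff_comm hst]
    _ ≤ ∑ j ∈ t \ s, f j := card_nsmul_le_sum _ _ _ ht

theorem sum_range_card_le_sum (s : Finset ℕ) : ∑ i ∈ range #s, i ≤ ∑ i ∈ s, i := by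
  rcases eq_or_ne (range #s) s with h | h
  · exact (congrArg (fun u => ∑ i ∈ u, i) h).le
  refine (sum_lt_sum_of_card_eq id #s (card_range _) h (fun i hi => ?_) fun j hj => ?_).le
  · exact mem_range.mp (mem_sdiff.mp hi).1
  · exact not_lt.mp fun hj' => (mem_sdiff.mp hj).2 (mem_range.mpr hj')

theorem sum_lt_sum_Ico_of_ne {n : ℕ} {s : Finset ℕ} (hs : s ⊆ range n)
    (hne : s ≠ Ico (n - #s) n) : ∑ i ∈ s, i < ∑ i ∈ Ico (n - #s) n, i := by
  have hcard : #s ≤ n := by simpa using card_le_card hs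
  refine sum_lt_sum_of_card_eq id (n - #s) (by simp; omega) hne (fun i hi => ?_) fun j hj => ?_
  · have hin := mem_range.mp (hs (mem_sdiff.mp hi).1)
    have hnot := (mem_sdiff.mp hi).2
    simp only [mem_Ico, not_and, not_lt] at hnot
    by_contra! h
    exact absurd (hnot h) (not_le.mpr hin)
  · exact (mem_Ico.mp (mem_sdiff.mp hj).1).1

theorem prod_range_natCast_sub {a m : ℕ} (h : m ≤ a) :
    ∏ b ∈ range m, ((a : ℚ) - b) = a ! / (a - m)! := by
  have hdesc : (a.descFactorial m : ℚ) = ∏ b ∈ range m, ((a : ℚ) - b) := by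
    rw [Nat.descFactorial_eq_prod_range, Nat.cast_prod]
    exact prod_congr rfl fun b hb => Nat.cast_sub (by have := mem_range.mp hb; omega)
  rw [← hdesc, eq_div_iff (by positivity)]
  exact_mod_cast (mul_comm _ _).trans (Nat.factorial_mul_descFactorial h)

section DifferenceOfVariables

variable {σ R : Type*} [CommRing R] {a b c d : σ}

theorem prime_X_sub_X [IsDomain R] (hab : a ≠ b) : Prime (X a - X b : MvPolynomial σ R) := by
  classical
  let e := (renameEquiv R (Equiv.optionSubtypeNe b).symm).trans (optionEquivLeft R {i // i ≠ b})
  have he : e (X a - X b) = -(Polynomial.X - Polynomial.C (X ⟨a, hab⟩)) := by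
    simp [e, Equiv.optionSubtypeNe_symm_apply, hab, optionEquivLeft_X_some,
      optionEquivLeft_X_none]
  rw [← MulEquiv.prime_iff e, he]
  exact (Polynomial.prime_X_sub_C _).neg

theorem X_sub_X_dvd_sub_rename_swap [DecidableEq σ] (p : MvPolynomial σ R) :
    X a - X b ∣ p - rename (Equiv.swap a b) p := by
  induction p using MvPolynomial.induction_on with
  | C r => simp
  | add p q hp hq => simpa [add_sub_add_comm] using dvd_add hp hq
  | mul_X p i hp =>
    have hi : X a - X b ∣ (X i - X (Equiv.swap a b i) : MvPolynomial σ R) := by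
      rcases eq_or_ne i a with rfl | hia
      · simp
      rcases eq_or_ne i b with rfl | hib
      · exact ⟨-1, by rw [Equiv.swap_apply_right]; ring⟩
      · simp [Equiv.swap_apply_of_ne_of_ne hia hib]
    have hsplit : p * X i - rename (Equiv.swap a b) (p * X i) =
        (p - rename (Equiv.swap a b) p) * X i +
          rename (Equiv.swap a b) p * (X i - X (Equiv.swap a b i)) := by
      rw [map_mul, rename_X]
      ring
    rw [hsplit]
    exact dvd_add (dvd_mul_of_dvd_left hp _) (dvd_mul_of_dvd_right hi _)

theorem X_sub_X_dvd_of_rename_swap_eq_neg [IsDomain R] [CharZero R] [DecidableEq σ]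
    (hab : a ≠ b) {p : MvPolynomial σ R} (hp : rename (Equiv.swap a b) p = -p) :
    X a - X b ∣ p := by
  have h2 : X a - X b ∣ 2 * p := by
    simpa [hp, two_mul] using X_sub_X_dvd_sub_rename_swap (a := a) (b := b) p
  refine ((prime_X_sub_X hab).dvd_or_dvd h2).resolve_left ?_
  rintro ⟨q, hq⟩
  have h0 := congrArg (eval 0) hq
  simp only [map_mul, map_sub, eval_X, Pi.zero_apply, sub_self, zero_mul, map_ofNat] at h0
  exact two_ne_zero h0

theorem eq_or_eq_of_X_sub_X_dvd [Nontrivial R] [DecidableEq σ]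
    (h : (X a - X b : MvPolynomial σ R) ∣ X c - X d) (hcd : c ≠ d) : c = a ∨ c = b := by
  by_contra! hc
  obtain ⟨q, hq⟩ := h
  simpa [Pi.single_apply, hc.1.symm, hc.2.symm, hcd.symm] using
    congrArg (eval (Pi.single c 1)) hq

theorem not_X_sub_X_dvd [Nontrivial R] (hcd : c ≠ d) (h : s(a, b) ≠ s(c, d)) :
    ¬(X a - X b : MvPolynomial σ R) ∣ X c - X d := by
  classical
  intro hdvd
  have hdvd' : (X a - X b : MvPolynomial σ R) ∣ X d - X c := by
    rw [← neg_sub (X c)]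
    exact hdvd.neg_right
  have hc := eq_or_eq_of_X_sub_X_dvd hdvd hcd
  have hd := eq_or_eq_of_X_sub_X_dvd hdvd' hcd.symm
  apply h
  rw [Sym2.eq_iff]
  grind

theorem prod_X_sub_X_dvd [IsDomain R] {s : Finset (σ × σ)} {p : MvPolynomial σ R}
    (hs : ∀ q ∈ s, q.1 ≠ q.2) (hinj : Set.InjOn (fun q : σ × σ => s(q.1, q.2)) s)
    (h : ∀ q ∈ s, X q.1 - X q.2 ∣ p) :
    ∏ q ∈ s, (X q.1 - X q.2) ∣ p :=
  prod_dvd_of_prime_of_pairwise_not_dvd (fun q hq => prime_X_sub_X (hs q hq))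
    (fun _ hq q' hq' hne => not_X_sub_X_dvd (hs q' hq') fun h => hne (hinj hq hq' h)) h

end DifferenceOfVariables

section Homogeneous

variable {σ R : Type*} [CommSemiring R] {p q : MvPolynomial σ R} {m l : ℕ}

theorem homogeneousComponent_mul_of_isHomogeneous_left (hp : p.IsHomogeneous m) (j : ℕ) :
    homogeneousComponent (m + j) (p * q) = p * homogeneousComponent j q := by
  conv_lhs => rw [← sum_homogeneousComponent q, mul_sum, map_sum]
  rw [sum_eq_single j]
  · exact homogeneousComponent_eq_self (hp.mul (homogeneousComponent_isHomogeneous j q))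
  · intro i _ hij
    rw [homogeneousComponent_of_mem ((mem_homogeneousSubmodule _ _).mpr
      (hp.mul (homogeneousComponent_isHomogeneous i q))), if_neg (by omega)]
  · intro hj
    rw [homogeneousComponent_eq_zero j q (by simpa using hj), mul_zero, map_zero]

variable [NoZeroDivisors R]

theorem homogeneousComponent_eq_zero_of_isHomogeneous_mul (hp : p.IsHomogeneous m)
    (hp0 : p ≠ 0) (hpq : (p * q).IsHomogeneous l) {j : ℕ} (hj : m + j ≠ l) :
    homogeneousComponent j q = 0 := by
  have h := homogeneousComponent_mul_of_isHomogeneous_left (q := q) hp j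
  rw [homogeneousComponent_of_mem ((mem_homogeneousSubmodule _ _).mpr hpq), if_neg hj] at h
  exact (mul_eq_zero.mp h.symm).resolve_left hp0

theorem isHomogeneous_of_mul_left {e : ℕ} (hp : p.IsHomogeneous m) (hp0 : p ≠ 0)
    (hpq : (p * q).IsHomogeneous (m + e)) : q.IsHomogeneous e := by
  rw [← sum_homogeneousComponent q]
  refine IsHomogeneous.sum _ _ _ fun j _ => ?_
  obtain rfl | hj := eq_or_ne j e
  · exact homogeneousComponent_isHomogeneous j q
  · rw [homogeneousComponent_eq_zero_of_isHomogeneous_mul hp hp0 hpq (by omega)]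
    exact isHomogeneous_zero _ _ _

theorem eq_zero_of_isHomogeneous_mul (hp : p.IsHomogeneous m) (hp0 : p ≠ 0)
    (hpq : (p * q).IsHomogeneous l) (hl : l < m) : q = 0 := by
  rw [← sum_homogeneousComponent q]
  exact sum_eq_zero fun j _ =>
    homogeneousComponent_eq_zero_of_isHomogeneous_mul hp hp0 hpq (by omega)

end Homogeneous

section LocalizationSum

variable {n : ℕ}

noncomputable def vandermondeDet (n : ℕ) : MvPolynomial (Fin n) ℤ :=
  (Matrix.vandermonde X).det

/-- The equivariant Euler class of the tangent space of `Gr_k(ℂⁿ)` at the torus-fixed point `J`,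
the `X i` being the equivariant parameters. -/
noncomputable def eulerClass (J : Finset (Fin n)) : MvPolynomial (Fin n) ℤ :=
  ∏ i ∈ J, ∏ j ∈ univ \ J, (X i - X j)

theorem rename_vandermondeDet (τ : Equiv.Perm (Fin n)) :
    rename τ (vandermondeDet n) = Equiv.Perm.sign τ • vandermondeDet n := by
  have h : (rename τ).mapMatrix (Matrix.vandermonde X) =
      (Matrix.vandermonde (X : Fin n → MvPolynomial (Fin n) ℤ)).submatrix τ id := by
    ext i j
    simp [Matrix.vandermonde_apply]
  rw [vandermondeDet, AlgHom.map_det, h, Matrix.det_permute, Units.smul_def, zsmul_eq_mul]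

theorem vandermondeDet_ne_zero : vandermondeDet n ≠ 0 :=
  Matrix.det_vandermonde_ne_zero_iff.mpr X_injective

theorem vandermondeDet_eq_prod :
    vandermondeDet n = ∏ q ∈ univ.filter (fun q : Fin n × Fin n => q.2 < q.1), (X q.1 - X q.2) := by
  rw [vandermondeDet, Matrix.det_vandermonde, prod_filter, ← univ_product_univ,
    prod_product_right]
  refine prod_congr rfl fun i _ => ?_
  rw [← prod_filter]
  congr 1
  ext
  simp

theorem isHomogeneous_vandermondeDet :
    (vandermondeDet n).IsHomogeneous (vandermondeDet n).totalDegree := by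
  have h : (vandermondeDet n).IsHomogeneous #(univ.filter fun q : Fin n × Fin n => q.2 < q.1) := by
    rw [vandermondeDet_eq_prod]
    simpa using IsHomogeneous.prod _ _ (fun _ => 1)
      fun q _ => (isHomogeneous_X ℤ q.1).sub (isHomogeneous_X ℤ q.2)
  rwa [h.totalDegree vandermondeDet_ne_zero]

theorem X_sub_X_dvd_vandermondeDet {i j : Fin n} (hij : i ≠ j) :
    X i - X j ∣ vandermondeDet n :=
  X_sub_X_dvd_of_rename_swap_eq_neg hij (by
    rw [rename_vandermondeDet, Equiv.Perm.sign_swap hij, Units.neg_smul, one_smul])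

theorem eulerClass_dvd_vandermondeDet (J : Finset (Fin n)) : eulerClass J ∣ vandermondeDet n := by
  have hne : ∀ q ∈ J ×ˢ (univ \ J), q.1 ≠ q.2 := fun q hq => by
    simp only [mem_product, mem_sdiff, mem_univ, true_and] at hq
    exact ne_of_mem_of_not_mem hq.1 hq.2
  rw [eulerClass, ← prod_product']
  refine prod_X_sub_X_dvd hne ?_ fun q hq => X_sub_X_dvd_vandermondeDet (hne q hq)
  intro q hq q' hq' h
  simp only [coe_product, coe_sdiff, coe_univ, Set.mem_prod, Set.mem_sdiff, Set.mem_univ,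
    true_and, mem_coe, Sym2.eq_iff] at hq hq' h
  grind

noncomputable def cofactor (J : Finset (Fin n)) : MvPolynomial (Fin n) ℤ :=
  (eulerClass_dvd_vandermondeDet J).choose

theorem vandermondeDet_eq_eulerClass_mul_cofactor (J : Finset (Fin n)) :
    vandermondeDet n = eulerClass J * cofactor J :=
  (eulerClass_dvd_vandermondeDet J).choose_spec

theorem eulerClass_ne_zero (J : Finset (Fin n)) : eulerClass J ≠ 0 :=
  left_ne_zero_of_mul (vandermondeDet_eq_eulerClass_mul_cofactor J ▸ vandermondeDet_ne_zero)

theorem cofactor_ne_zero (J : Finset (Fin n)) : cofactor J ≠ 0 :=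
  right_ne_zero_of_mul (vandermondeDet_eq_eulerClass_mul_cofactor J ▸ vandermondeDet_ne_zero)

theorem rename_eulerClass (τ : Equiv.Perm (Fin n)) (J : Finset (Fin n)) :
    rename τ (eulerClass J) = eulerClass (J.map τ.toEmbedding) := by
  have h : univ \ J.map τ.toEmbedding = (univ \ J).map τ.toEmbedding := by
    rw [Finset.map_sdiff, map_univ_equiv]
  simp only [eulerClass, map_prod, map_sub, rename_X, h, prod_map]
  rfl

theorem rename_cofactor (τ : Equiv.Perm (Fin n)) (J : Finset (Fin n)) :
    rename τ (cofactor J) = Equiv.Perm.sign τ • cofactor (J.map τ.toEmbedding) := by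
  apply mul_left_cancel₀ (eulerClass_ne_zero (J.map τ.toEmbedding))
  rw [mul_smul_comm, ← vandermondeDet_eq_eulerClass_mul_cofactor, ← rename_eulerClass, ← map_mul,
    ← vandermondeDet_eq_eulerClass_mul_cofactor, rename_vandermondeDet]

theorem isHomogeneous_eulerClass {k : ℕ} {J : Finset (Fin n)} (hJ : #J = k) :
    (eulerClass J).IsHomogeneous (k * (n - k)) := by
  have hrow (i : Fin n) :
      (∏ j ∈ univ \ J, (X i - X j : MvPolynomial (Fin n) ℤ)).IsHomogeneous #(univ \ J) := by
    simpa using IsHomogeneous.prod (univ \ J) (fun j => (X i - X j : MvPolynomial (Fin n) ℤ))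
      (fun _ => 1) fun j _ => (isHomogeneous_X ℤ i).sub (isHomogeneous_X ℤ j)
  simpa [eulerClass, card_sdiff, hJ] using IsHomogeneous.prod J _ _ fun i _ => hrow i

theorem isHomogeneous_cofactor {k : ℕ} {J : Finset (Fin n)} (hJ : #J = k) :
    k * (n - k) ≤ (vandermondeDet n).totalDegree ∧
      (cofactor J).IsHomogeneous ((vandermondeDet n).totalDegree - k * (n - k)) := by
  have hW := isHomogeneous_eulerClass hJ
  have hV : (eulerClass J * cofactor J).IsHomogeneous (vandermondeDet n).totalDegree := by
    rw [← vandermondeDet_eq_eulerClass_mul_cofactor]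
    exact isHomogeneous_vandermondeDet
  have hle : k * (n - k) ≤ (vandermondeDet n).totalDegree := by
    by_contra! h
    exact cofactor_ne_zero J (eq_zero_of_isHomogeneous_mul hW (eulerClass_ne_zero J) hV h)
  refine ⟨hle, isHomogeneous_of_mul_left hW (eulerClass_ne_zero J) ?_⟩
  rwa [Nat.add_sub_cancel' hle]

/-- `vandermondeDet n` times the localization sum `∑_J (∑_{i ∈ J} X i) ^ d / eulerClass J`. -/
noncomputable def localizationNumerator (n k d : ℕ) : MvPolynomial (Fin n) ℤ :=
  ∑ J ∈ univ.powersetCard k, (∑ i ∈ J, X i) ^ d * cofactor J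

theorem rename_localizationNumerator (τ : Equiv.Perm (Fin n)) (k d : ℕ) :
    rename τ (localizationNumerator n k d) = Equiv.Perm.sign τ • localizationNumerator n k d := by
  have hP : (univ.powersetCard k).map (mapEmbedding τ.toEmbedding).toEmbedding =
      univ.powersetCard k := by
    rw [← powersetCard_map, map_univ_equiv]
  rw [localizationNumerator, map_sum, smul_sum]
  conv_rhs => rw [← hP, sum_map]
  refine sum_congr rfl fun J _ => ?_
  simp [rename_cofactor, sum_map, mul_smul_comm]

theorem vandermondeDet_dvd_localizationNumerator (k d : ℕ) :
    vandermondeDet n ∣ localizationNumerator n k d := by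
  rw [vandermondeDet_eq_prod]
  refine prod_X_sub_X_dvd (fun q hq => (mem_filter.mp hq).2.ne') ?_
    fun q hq => X_sub_X_dvd_of_rename_swap_eq_neg (mem_filter.mp hq).2.ne' ?_
  · intro q hq q' hq' h
    simp only [coe_filter, mem_univ, true_and, Set.mem_ofPred_eq, Sym2.eq_iff] at hq hq' h
    grind
  · rw [rename_localizationNumerator, Equiv.Perm.sign_swap (mem_filter.mp hq).2.ne',
      Units.neg_smul, one_smul]

theorem isHomogeneous_localizationNumerator (k d : ℕ) :
    (localizationNumerator n k d).IsHomogeneous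
      (d + ((vandermondeDet n).totalDegree - k * (n - k))) := by
  refine IsHomogeneous.sum _ _ _ fun J hJ => ?_
  have h1 : (∑ i ∈ J, X i : MvPolynomial (Fin n) ℤ).IsHomogeneous 1 :=
    IsHomogeneous.sum _ _ _ fun i _ => isHomogeneous_X ℤ i
  simpa using (h1.pow d).mul (isHomogeneous_cofactor (mem_powersetCard_univ.mp hJ)).2

theorem localizationNumerator_eq_zero {k d : ℕ} (hkn : k ≤ n) (hd : d < k * (n - k)) :
    localizationNumerator n k d = 0 := by
  obtain ⟨J, -, hJ⟩ := exists_subset_card_eq (s := (univ : Finset (Fin n))) (by simpa using hkn)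
  have hle := (isHomogeneous_cofactor hJ).1
  obtain ⟨B, hB⟩ := vandermondeDet_dvd_localizationNumerator (n := n) k d
  have h := isHomogeneous_localizationNumerator (n := n) k d
  rw [hB] at h
  rw [hB, eq_zero_of_isHomogeneous_mul isHomogeneous_vandermondeDet vandermondeDet_ne_zero h
    (by omega), mul_zero]

theorem exists_localizationNumerator_eq {k : ℕ} (hkn : k ≤ n) :
    ∃ c : ℤ, localizationNumerator n k (k * (n - k)) = C c * vandermondeDet n := by
  obtain ⟨J, -, hJ⟩ := exists_subset_card_eq (s := (univ : Finset (Fin n))) (by simpa using hkn)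
  have hle := (isHomogeneous_cofactor hJ).1
  obtain ⟨B, hB⟩ := vandermondeDet_dvd_localizationNumerator (n := n) k (k * (n - k))
  have h := isHomogeneous_localizationNumerator (n := n) k (k * (n - k))
  rw [hB, show k * (n - k) + ((vandermondeDet n).totalDegree - k * (n - k)) =
    (vandermondeDet n).totalDegree + 0 by omega] at h
  have hB0 := isHomogeneous_of_mul_left isHomogeneous_vandermondeDet vandermondeDet_ne_zero h
  refine ⟨coeff 0 B, ?_⟩
  rw [hB, mul_comm]
  congr 1
  exact totalDegree_eq_zero_iff_eq_C.mp ((totalDegree_zero_iff_isHomogeneous _).mpr hB0)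

variable {F : Type*} [Field F] {x : Fin n → F}

theorem aeval_vandermondeDet_ne_zero (hx : Function.Injective x) :
    aeval x (vandermondeDet n) ≠ 0 := by
  have h : (aeval x).mapMatrix (Matrix.vandermonde (X : Fin n → MvPolynomial (Fin n) ℤ)) =
      Matrix.vandermonde x := by
    ext
    simp [Matrix.vandermonde_apply]
  rw [vandermondeDet, AlgHom.map_det, h]
  exact Matrix.det_vandermonde_ne_zero_iff.mpr hx

theorem sum_pow_div_eulerClass (hx : Function.Injective x) (k d : ℕ) :
    ∑ J ∈ univ.powersetCard k, (∑ i ∈ J, x i) ^ d / ∏ i ∈ J, ∏ j ∈ univ \ J, (x i - x j) =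
      aeval x (localizationNumerator n k d) / aeval x (vandermondeDet n) := by
  rw [localizationNumerator, map_sum, sum_div]
  refine sum_congr rfl fun J _ => ?_
  have hV := aeval_vandermondeDet_ne_zero hx
  rw [vandermondeDet_eq_eulerClass_mul_cofactor J, map_mul] at hV
  rw [vandermondeDet_eq_eulerClass_mul_cofactor J, map_mul, map_mul,
    mul_div_mul_right _ _ (right_ne_zero_of_mul hV)]
  simp [eulerClass, map_prod]

theorem sum_eval_div_eulerClass {k : ℕ} (hkn : k ≤ n) {c : ℤ}
    (hc : localizationNumerator n k (k * (n - k)) = C c * vandermondeDet n)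
    (hx : Function.Injective x) {P : Polynomial F} (hP : P.Monic)
    (hdeg : P.natDegree = k * (n - k)) :
    ∑ J ∈ univ.powersetCard k, P.eval (∑ i ∈ J, x i) / ∏ i ∈ J, ∏ j ∈ univ \ J, (x i - x j) =
      c := by
  have hlead : P.coeff (k * (n - k)) = 1 := hdeg ▸ hP.coeff_natDegree
  simp_rw [Polynomial.eval_eq_sum_range, hdeg, sum_div, mul_div_assoc]
  rw [sum_comm]
  simp_rw [← mul_sum, sum_pow_div_eulerClass hx]
  rw [sum_range_succ, sum_eq_zero fun e he => by
      rw [localizationNumerator_eq_zero hkn (mem_range.mp he), map_zero, zero_div, mul_zero],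
    zero_add, hlead, hc, map_mul, mul_div_assoc, div_self (aeval_vandermondeDet_ne_zero hx)]
  simp

theorem sum_multiset_prod_div_eulerClass {k : ℕ} (hkn : k ≤ n) {c : ℤ}
    (hc : localizationNumerator n k (k * (n - k)) = C c * vandermondeDet n)
    (hx : Function.Injective x) {M : Multiset F} (hM : Multiset.card M = k * (n - k)) :
    ∑ J ∈ univ.powersetCard k, (M.map fun m => (∑ i ∈ J, x i) - m).prod /
      ∏ i ∈ J, ∏ j ∈ univ \ J, (x i - x j) = c := by
  have h := sum_eval_div_eulerClass hkn hc hx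
    (Polynomial.monic_multiset_prod_of_monic _ _ fun m _ => Polynomial.monic_X_sub_C m)
    (by rw [Polynomial.natDegree_multiset_prod_X_sub_C_eq_card, hM])
  simpa [Polynomial.eval_multiset_prod, Multiset.map_map] using h

end LocalizationSum

section TopFixedPoint

variable {n k : ℕ}

def topFixedPoint (n k : ℕ) : Finset (Fin n) := univ.filter fun i => n - k ≤ (i : ℕ)

theorem map_topFixedPoint : (topFixedPoint n k).map Fin.valEmbedding = Ico (n - k) n := by
  ext a
  simp only [topFixedPoint, mem_map, mem_filter, mem_univ, true_and, Fin.valEmbedding_apply,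
    mem_Ico]
  exact ⟨fun ⟨i, hi, hia⟩ => hia ▸ ⟨hi, i.isLt⟩, fun ⟨ha, han⟩ => ⟨⟨a, han⟩, ha, rfl⟩⟩

theorem map_compl_topFixedPoint :
    (univ \ topFixedPoint n k).map Fin.valEmbedding = range (n - k) := by
  ext a
  simp only [topFixedPoint, mem_map, mem_sdiff, mem_filter, mem_univ, true_and,
    Fin.valEmbedding_apply, mem_range, not_le]
  exact ⟨fun ⟨i, hi, hia⟩ => hia ▸ hi, fun ha => ⟨⟨a, by omega⟩, ha, rfl⟩⟩

theorem card_topFixedPoint (hkn : k ≤ n) : #(topFixedPoint n k) = k := by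
  rw [← card_map Fin.valEmbedding, map_topFixedPoint, Nat.card_Ico]
  omega

theorem sum_range_le_sum_val {J : Finset (Fin n)} (hJ : #J = k) :
    ∑ r ∈ range k, r ≤ ∑ i ∈ J, (i : ℕ) := by
  simpa [hJ, sum_map] using sum_range_card_le_sum (J.map Fin.valEmbedding)

theorem sum_val_lt_of_ne_topFixedPoint {J : Finset (Fin n)} (hJ : #J = k)
    (hne : J ≠ topFixedPoint n k) : ∑ i ∈ J, (i : ℕ) < ∑ a ∈ Ico (n - k) n, a := by
  have hsub : J.map Fin.valEmbedding ⊆ range n := fun a ha => by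
    obtain ⟨i, -, rfl⟩ := mem_map.mp ha
    exact mem_range.mpr i.isLt
  have hne' : J.map Fin.valEmbedding ≠ Ico (n - #(J.map Fin.valEmbedding)) n := by
    rwa [card_map, hJ, ← map_topFixedPoint, Ne, map_inj]
  simpa [hJ, sum_map] using sum_lt_sum_Ico_of_ne hsub hne'

theorem prod_prod_sub_topFixedPoint (hkn : k ≤ n) :
    ∏ i ∈ topFixedPoint n k, ∏ j ∈ univ \ topFixedPoint n k, (((i : ℕ) : ℚ) - (j : ℕ)) =
      ∏ r ∈ range k, ((n - k + r)! / r ! : ℚ) := by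
  calc _ = ∏ a ∈ Ico (n - k) n, ∏ b ∈ range (n - k), ((a : ℚ) - b) := by
        rw [← map_topFixedPoint, ← map_compl_topFixedPoint, prod_map]
        simp [prod_map]
    _ = _ := by
      rw [prod_Ico_eq_prod_range, show n - (n - k) = k by omega]
      refine prod_congr rfl fun r _ => ?_
      rw [prod_range_natCast_sub (by omega), show n - k + r - (n - k) = r by omega]

theorem div_prod_factorial_div_eq (hkn : k ≤ n) (a : ℚ) :
    a / ∏ r ∈ range k, ((n - k + r)! / r ! : ℚ) = a * ∏ i ∈ range k, (i ! : ℚ) / (n - 1 - i)! := by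
  rw [prod_div_distrib, prod_div_distrib, div_div_eq_mul_div, mul_div_assoc]
  congr 2
  rw [← prod_range_reflect]
  exact prod_congr rfl fun i hi => by
    have := mem_range.mp hi
    rw [show n - k + (k - 1 - i) = n - 1 - i by omega]

theorem cast_eq_of_localizationNumerator_eq (hkn : k ≤ n) {c : ℤ}
    (hc : localizationNumerator n k (k * (n - k)) = C c * vandermondeDet n) :
    (c : ℚ) = (k * (n - k))! * ∏ i ∈ range k, (i ! : ℚ) / (n - 1 - i)! := by
  obtain ⟨N, hN⟩ : ∃ N, N = k * (n - k) := ⟨_, rfl⟩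
  obtain ⟨T, hTdef⟩ : ∃ T, T = ∑ a ∈ Ico (n - k) n, a := ⟨_, rfl⟩
  have hT : T = N + ∑ r ∈ range k, r := by
    rw [hTdef, hN, sum_Ico_eq_sum_range, show n - (n - k) = k by omega, sum_add_distrib,
      sum_const, card_range, smul_eq_mul]
  let M : Multiset ℚ := (Multiset.range N).map fun j : ℕ => (T : ℚ) - (j + 1)
  have hx : Function.Injective fun i : Fin n => ((i : ℕ) : ℚ) :=
    Nat.cast_injective.comp Fin.val_injective
  rw [← hN, ← sum_multiset_prod_div_eulerClass hkn hc hx (M := M) (by simp [M, hN]),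
    sum_eq_single_of_mem _ (mem_powersetCard_univ.mpr (card_topFixedPoint hkn))]
  · have hsum : ∑ i ∈ topFixedPoint n k, ((i : ℕ) : ℚ) = T := by
      rw [← Nat.cast_sum, hTdef, ← map_topFixedPoint, sum_map]
      rfl
    have hprod : (M.map fun m => (T : ℚ) - m).prod = N ! := by
      simp only [M, Multiset.map_map, Function.comp_def, sub_sub_cancel, ← range_val,
        ← prod_eq_multiset_prod]
      exact_mod_cast prod_range_add_one_eq_factorial N
    rw [hsum, hprod, prod_prod_sub_topFixedPoint hkn, div_prod_factorial_div_eq hkn]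
  · intro J hJ hne
    have hJk := mem_powersetCard_univ.mp hJ
    have hlt := sum_val_lt_of_ne_topFixedPoint hJk hne
    have hle := sum_range_le_sum_val hJk
    rw [Multiset.prod_eq_zero, zero_div]
    refine Multiset.mem_map.mpr ⟨(∑ i ∈ J, (i : ℕ) : ℕ), ?_, by push_cast; ring⟩
    refine Multiset.mem_map.mpr ⟨T - 1 - ∑ i ∈ J, (i : ℕ), Multiset.mem_range.mpr (by omega), ?_⟩
    rw [Nat.cast_sub (by omega), Nat.cast_sub (by omega)]
    push_cast
    ring

end TopFixedPoint

end GrassmannianLocalization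

theorem grassmannian_localization_identity_general {F : Type*} [Field F] (n k : ℕ)
    (hkn : k ≤ n)
    (x : Fin n → F) (hx : Function.Injective x)
    (M : Multiset F) (hM : Multiset.card M = k * (n - k))
    (D : ℕ)
    (hD : (D : ℚ) = (Nat.factorial (k * (n - k)) : ℚ) *
      ∏ i ∈ Finset.range k,
        (Nat.factorial i : ℚ) / (Nat.factorial (n - 1 - i) : ℚ)) :
    (D : F) =
      ∑ J ∈ Finset.univ.powersetCard k,
        (M.map (fun m => (∑ i ∈ J, x i) - m)).prod /
          ∏ i ∈ J, ∏ j ∈ Finset.univ \ J, (x i - x j) := by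
  obtain ⟨c, hc⟩ := GrassmannianLocalization.exists_localizationNumerator_eq hkn
  have hcD : c = D := by
    exact_mod_cast
      (GrassmannianLocalization.cast_eq_of_localizationNumerator_eq hkn hc).trans hD.symm
  rw [GrassmannianLocalization.sum_multiset_prod_div_eulerClass hkn hc hx hM, hcD,
    Int.cast_natCast]

theorem grassmannian_localization_identity {F : Type*} [Field F] (n k : ℕ)
    (hk : 1 ≤ k) (hkn : k ≤ n)
    (x : Fin n → F) (hx : Function.Injective x)
    (M : Multiset F) (hM : Multiset.card M = k * (n - k))
    (D : ℕ)
    (hD : (D : ℚ) = (Nat.factorial (k * (n - k)) : ℚ) *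
      ∏ i ∈ Finset.range k,
        (Nat.factorial i : ℚ) / (Nat.factorial (n - 1 - i) : ℚ)) :
    (D : F) =
      ∑ J ∈ Finset.univ.powersetCard k,
        (M.map (fun m => (∑ i ∈ J, x i) - m)).prod /
          ∏ i ∈ J, ∏ j ∈ Finset.univ \ J, (x i - x j) :=
  grassmannian_localization_identity_general n k hkn x hx M hM D hD
end

section
/- For integers 1 ≤ k ≤ n and a k-element subset I = (I_1 < ... < I_k) of {1,...,n}, with d = Σ I_i - k(k+1)/2, the number d! / ((I_1-1)!···(I_k-1)!) · ∏_{i<j}(I_j - I_i) is a positive integer. -/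
/-!
Put `ℓᵢ = Iᵢ - 1`, so that `∑ ℓᵢ = d + k(k-1)/2` and the number is
`d! ∏_{i<j} (ℓⱼ - ℓᵢ) / ∏ ℓᵢ!`, positive because `I` is increasing. Column operations turn the
Vandermonde matrix of the `ℓᵢ` into the matrix of falling factorials
`ℓᵢ (ℓᵢ - 1) ⋯ (ℓᵢ - j + 1)`. In the Leibniz expansion of its determinant each term is, up to
sign, `∏ᵢ ℓ_{σ i}! / (ℓ_{σ i} - i)!`, and since `∑ (ℓ_{σ i} - i) = d`, multiplying it by
`d! / ∏ ℓᵢ!` leaves a multinomial coefficient.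
-/

open Finset Nat Matrix

theorem Nat.prod_factorial_dvd_factorial_mul_prod_descFactorial {ι : Type*} (s : Finset ι)
    (f a : ι → ℕ) {D : ℕ} (h : ∑ i ∈ s, f i = D + ∑ i ∈ s, a i) :
    ∏ i ∈ s, (f i)! ∣ D ! * ∏ i ∈ s, (f i).descFactorial (a i) := by
  by_cases ha : ∀ i ∈ s, a i ≤ f i
  · have hD : D = ∑ i ∈ s, (f i - a i) := by
      have : ∑ i ∈ s, (f i - a i) + ∑ i ∈ s, a i = ∑ i ∈ s, f i := by
        rw [← sum_add_distrib]
        exact sum_congr rfl fun i hi => Nat.sub_add_cancel (ha i hi)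
      omega
    calc ∏ i ∈ s, (f i)!
        = (∏ i ∈ s, (f i - a i)!) * ∏ i ∈ s, (f i).descFactorial (a i) := by
          rw [← prod_mul_distrib]
          exact prod_congr rfl fun i hi => (factorial_mul_descFactorial (ha i hi)).symm
      _ ∣ D ! * ∏ i ∈ s, (f i).descFactorial (a i) := by
          rw [hD]
          exact mul_dvd_mul_right (prod_factorial_dvd_factorial_sum s _) _
  · simp only [not_forall, not_le] at ha
    obtain ⟨i, hi, hlt⟩ := ha
    rw [prod_eq_zero (f := fun i => (f i).descFactorial (a i)) hi
      (descFactorial_eq_zero_iff_lt.mpr hlt), mul_zero]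
    exact dvd_zero _

theorem Matrix.det_vandermonde_eq_prod_filter_lt {R : Type*} [CommRing R] {k : ℕ}
    (x : Fin k → R) :
    (vandermonde x).det =
      ∏ p ∈ univ.filter (fun p : Fin k × Fin k => p.1 < p.2), (x p.2 - x p.1) := by
  rw [det_vandermonde, prod_filter, ← univ_product_univ, prod_product]
  simp only [← prod_filter, filter_lt_eq_Ioi]

theorem Matrix.det_vandermonde_natCast_eq_det_descFactorial {R : Type*} [CommRing R]
    [IsDomain R] {k : ℕ} (ℓ : Fin k → ℕ) :
    (vandermonde fun i => (ℓ i : R)).det =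
      (of fun i j : Fin k => ((ℓ i).descFactorial j : R)).det := by
  rw [det_eval_matrixOfPolynomials_eq_det_vandermonde _ (fun j => descPochhammer R j)
    (fun j => descPochhammer_natDegree R j) (fun j => monic_descPochhammer R j)]
  simp only [descPochhammer_eval_eq_descFactorial]

theorem prod_factorial_dvd_factorial_mul_det_descFactorial {k : ℕ} (ℓ : Fin k → ℕ) {d : ℕ}
    (hd : ∑ i, ℓ i = d + ∑ i : Fin k, (i : ℕ)) :
    (∏ i, (ℓ i)! : ℤ) ∣ d ! * (of fun i j : Fin k => ((ℓ i).descFactorial j : ℤ)).det := by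
  rw [det_apply', mul_sum]
  refine dvd_sum fun σ _ => ?_
  have hσ : ∑ i, ℓ (σ i) = d + ∑ i : Fin k, (i : ℕ) := by rw [Equiv.sum_comp σ ℓ, hd]
  rw [← Equiv.prod_comp σ, mul_left_comm]
  refine dvd_mul_of_dvd_right ?_ _
  simp only [of_apply]
  exact_mod_cast prod_factorial_dvd_factorial_mul_prod_descFactorial univ (ℓ ∘ σ) (↑) hσ

theorem prod_factorial_dvd_factorial_mul_prod_sub {k : ℕ} (ℓ : Fin k → ℕ) {d : ℕ}
    (hd : ∑ i, ℓ i = d + ∑ i : Fin k, (i : ℕ)) :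
    (∏ i, (ℓ i)! : ℤ) ∣
      d ! * ∏ p ∈ univ.filter (fun p : Fin k × Fin k => p.1 < p.2), ((ℓ p.2 : ℤ) - ℓ p.1) := by
  rw [← det_vandermonde_eq_prod_filter_lt fun i => (ℓ i : ℤ),
    det_vandermonde_natCast_eq_det_descFactorial]
  exact prod_factorial_dvd_factorial_mul_det_descFactorial ℓ hd

theorem schubert_degree_pos_int_general (k : ℕ)
    (I : Fin k → ℕ) (hmono : StrictMono I)
    (hI1 : ∀ i, 1 ≤ I i)
    (d : ℕ) (hd : d + k * (k + 1) / 2 = ∑ i, I i) :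
    ∃ m : ℕ, 0 < m ∧
      (m : ℚ) = (Nat.factorial d : ℚ) /
          (∏ i, (Nat.factorial (I i - 1) : ℚ)) *
        ∏ p ∈ Finset.univ.filter (fun p : Fin k × Fin k => p.1 < p.2),
          ((I p.2 : ℚ) - (I p.1 : ℚ)) := by
  obtain ⟨ℓ, rfl⟩ : ∃ ℓ : Fin k → ℕ, I = fun i => ℓ i + 1 :=
    ⟨fun i => I i - 1, funext fun i => (Nat.sub_add_cancel (hI1 i)).symm⟩
  have hℓ : ∑ i, ℓ i = d + ∑ i : Fin k, (i : ℕ) := by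
    have hgauss : k * (k + 1) / 2 = ∑ i : Fin k, ((i : ℕ) + 1) := by
      rw [Fin.sum_univ_eq_sum_range (· + 1), ← add_zero (∑ i ∈ range k, (i + 1)),
        ← sum_range_succ' (fun i => i), sum_range_id, Nat.add_sub_cancel, Nat.mul_comm]
    simp only [hgauss, sum_add_distrib] at hd
    omega
  obtain ⟨c, hc⟩ := prod_factorial_dvd_factorial_mul_prod_sub ℓ hℓ
  have hq : (d ! : ℚ) / (∏ i, ((ℓ i + 1 - 1)! : ℚ)) *
      ∏ p ∈ univ.filter (fun p : Fin k × Fin k => p.1 < p.2),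
        (((ℓ p.2 + 1 : ℕ) : ℚ) - (ℓ p.1 + 1 : ℕ)) = c := by
    have hfac : (∏ i, ((ℓ i)! : ℚ)) ≠ 0 := by positivity
    simp only [Nat.add_sub_cancel, Nat.cast_add, add_sub_add_right_eq_sub]
    rw [div_mul_eq_mul_div, div_eq_iff hfac, mul_comm (c : ℚ)]
    exact_mod_cast hc
  have hpos : (0 : ℚ) < c := by
    rw [← hq]
    refine mul_pos (by positivity) (prod_pos fun p hp => sub_pos.mpr ?_)
    exact_mod_cast hmono (mem_filter.mp hp).2
  lift c to ℕ using (by exact_mod_cast hpos.le)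
  exact ⟨c, by exact_mod_cast hpos, hq.symm⟩

theorem schubert_degree_pos_int (n k : ℕ) (hk : 1 ≤ k) (hkn : k ≤ n)
    (I : Fin k → ℕ) (hmono : StrictMono I)
    (hI1 : ∀ i, 1 ≤ I i) (hIn : ∀ i, I i ≤ n)
    (d : ℕ) (hd : d + k * (k + 1) / 2 = ∑ i, I i) :
    ∃ m : ℕ, 0 < m ∧
      (m : ℚ) = (Nat.factorial d : ℚ) /
          (∏ i, (Nat.factorial (I i - 1) : ℚ)) *
        ∏ p ∈ Finset.univ.filter (fun p : Fin k × Fin k => p.1 < p.2),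
          ((I p.2 : ℚ) - (I p.1 : ℚ)) :=
  schubert_degree_pos_int_general k I hmono hI1 d hd
end

section
/- For variables λ = (λ_1,...,λ_k) and x = (x_1,...,x_k) over a field of characteristic 0 with d = binom(k,2), the antisymmetrization of (λ·x)^d over permutations of the x-variables equals the multinomial coefficient binom(d; 0,1,...,k-1) times V(λ)·V(x): Σ_{π ∈ S_k} sgn(π) (Σ_i λ_i x_{π(i)})^d = (d! / (0!·1!···(k-1)!)) · V(λ) · V(x), where V denotes the Vandermonde determinant ∏_{i<j}(·_j − ·_i). -/
/-!
Expand `(∑ i, x i * y (π i)) ^ d` by the multinomial theorem. Antisymmetrizing the monomial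
`∏ i, y (π i) ^ c i` over `π` yields the alternant `det (y a ^ c b)`, which vanishes unless the
exponent vector `c` is injective. A set of `k` naturals sums to at least `k choose 2`, with equality
only for `{0, …, k - 1}`, so for `d = k choose 2` the surviving `c` are the permutations `σ` of
`0, …, k - 1`. For those the alternant is `sign σ` times the Vandermonde determinant of `y`, and
the remaining sum `∑ σ, sign σ * ∏ i, x i ^ σ i` is the Vandermonde determinant of `x`.
-/

open Finset Matrix Equiv

theorem Finset.eq_range_of_card_eq_of_sum_le {n : ℕ} {S : Finset ℕ} (hcard : #S = n)
    (hsum : ∑ i ∈ S, i ≤ ∑ i ∈ range n, i) : S = range n := by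
  -- `S \ range n` and `range n \ S` have the same size, but only the former has elements `≥ n`.
  by_contra hne
  have hcomm : #(S \ range n) = #(range n \ S) := card_sdiff_comm (by simp [hcard])
  have hmissing : (range n \ S).Nonempty :=
    sdiff_nonempty.mpr fun h => hne (eq_of_subset_of_card_le h (by simp [hcard])).symm
  have hsmall : ∑ i ∈ range n \ S, i < #(range n \ S) * n := by
    calc ∑ i ∈ range n \ S, i < ∑ _ ∈ range n \ S, n :=
          sum_lt_sum_of_nonempty hmissing fun i hi => by simpa using (mem_sdiff.mp hi).1
      _ = #(range n \ S) * n := by simp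
  have hlarge : #(S \ range n) * n ≤ ∑ i ∈ S \ range n, i :=
    card_nsmul_le_sum _ _ _ fun i hi => by simpa using (mem_sdiff.mp hi).2
  rw [hcomm] at hlarge
  have hS := sum_inter_add_sum_sdiff S (range n) id
  have hR := sum_inter_add_sum_sdiff (range n) S id
  rw [inter_comm] at hR
  simp only [id] at hS hR
  omega

theorem Fin.sum_val_eq_choose_two (k : ℕ) : ∑ i : Fin k, (i : ℕ) = k.choose 2 := by
  rw [Fin.sum_univ_eq_sum_range (fun i => i) k, sum_range_id, Nat.choose_two_right]

theorem Fin.exists_perm_of_injective_of_sum_le {k : ℕ} {c : Fin k → ℕ}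
    (hinj : Function.Injective c) (hsum : ∑ i, c i ≤ k.choose 2) :
    ∃ σ : Equiv.Perm (Fin k), ∀ i, c i = σ i := by
  have himage : univ.image c = range k := by
    refine eq_range_of_card_eq_of_sum_le (by simp [card_image_of_injective _ hinj]) ?_
    rwa [sum_image hinj.injOn, sum_range_id, ← Nat.choose_two_right]
  have hlt (i : Fin k) : c i < k := mem_range.mp (himage ▸ mem_image_of_mem c (mem_univ i))
  refine ⟨Equiv.ofBijective (fun i => ⟨c i, hlt i⟩) ?_, fun i => rfl⟩
  exact (Fintype.bijective_iff_injective_and_card _).mpr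
    ⟨fun a b h => hinj (congrArg Fin.val h), rfl⟩

theorem Nat.multinomial_univ_comp_equiv {ι κ : Type*} [Fintype ι] [Fintype κ] (e : ι ≃ κ)
    (f : κ → ℕ) : Nat.multinomial univ (f ∘ e) = Nat.multinomial univ f := by
  simp only [Nat.multinomial, Function.comp_apply, e.sum_comp f,
    e.prod_comp fun i => (f i).factorial]

theorem Nat.multinomial_univ_fin_val (k : ℕ) :
    Nat.multinomial univ (fun i : Fin k => (i : ℕ)) = Nat.multinomial (range k) id := by
  simp only [Nat.multinomial, Fin.sum_univ_eq_sum_range (fun i => i) k,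
    Fin.prod_univ_eq_prod_range (fun i => i.factorial) k, id]

namespace Matrix

variable {R : Type*} [CommRing R]

theorem det_of_pow_eq_zero_of_not_injective {n : Type*} [Fintype n] [DecidableEq n]
    (y : n → R) {c : n → ℕ} (hc : ¬ Function.Injective c) :
    det (of fun a b => y a ^ c b) = 0 := by
  obtain ⟨a, b, hab, hne⟩ := Function.not_injective_iff.mp hc
  exact det_zero_of_column_eq hne fun i => by simp [hab]

theorem det_of_pow_perm {k : ℕ} (y : Fin k → R) (σ : Perm (Fin k)) :
    det (of fun a b => y a ^ (σ b : ℕ)) = Perm.sign σ * det (vandermonde y) :=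
  det_permute' σ (vandermonde y)

theorem det_vandermonde_eq_sum_sign {k : ℕ} (x : Fin k → R) :
    det (vandermonde x) = ∑ σ : Perm (Fin k), Perm.sign σ • ∏ i, x i ^ (σ i : ℕ) := by
  rw [← det_transpose, det_apply]
  rfl

end Matrix

open scoped Classical in
theorem Fin.filter_injective_piAntidiag_choose_two (k : ℕ) :
    {c ∈ piAntidiag (univ : Finset (Fin k)) (k.choose 2) | Function.Injective c} =
      univ.image fun σ : Perm (Fin k) => fun i => (σ i : ℕ) := by
  ext c
  simp only [mem_filter, mem_piAntidiag, mem_image, mem_univ, implies_true, and_true, true_and]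
  constructor
  · rintro ⟨hsum, hinj⟩
    obtain ⟨σ, hσ⟩ := exists_perm_of_injective_of_sum_le hinj hsum.le
    exact ⟨σ, funext fun i => (hσ i).symm⟩
  · rintro ⟨σ, rfl⟩
    exact ⟨(Equiv.sum_comp σ fun i : Fin k => (i : ℕ)).trans (sum_val_eq_choose_two k),
      fun a b h => σ.injective (Fin.val_injective h)⟩

theorem sum_sign_smul_sum_mul_pow_choose_two {R : Type*} [CommRing R] {k : ℕ}
    (x y : Fin k → R) :
    ∑ π : Perm (Fin k), (Perm.sign π : ℤ) • (∑ i, x i * y (π i)) ^ k.choose 2 =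
      Nat.multinomial (range k) id * det (vandermonde x) * det (vandermonde y) := by
  classical
  set A := piAntidiag (univ : Finset (Fin k)) (k.choose 2)
  have hexpand (π : Perm (Fin k)) : (∑ i, x i * y (π i)) ^ k.choose 2 =
      ∑ c ∈ A, Nat.multinomial univ c * ((∏ i, x i ^ c i) * ∏ i, y (π i) ^ c i) := by
    simp only [sum_pow_eq_sum_piAntidiag, mul_pow, prod_mul_distrib, A]
  have hantisymm (c : Fin k → ℕ) :
      ∑ π : Perm (Fin k), (Perm.sign π : ℤ) • ∏ i, y (π i) ^ c i =
        det (of fun a b => y a ^ c b) := by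
    simp [det_apply, Units.smul_def]
  calc ∑ π : Perm (Fin k), (Perm.sign π : ℤ) • (∑ i, x i * y (π i)) ^ k.choose 2
      = ∑ c ∈ A, Nat.multinomial univ c * (∏ i, x i ^ c i) *
          det (of fun a b => y a ^ c b) := by
        simp_rw [hexpand, smul_sum, ← hantisymm, mul_sum]
        rw [sum_comm]
        refine sum_congr rfl fun c _ => sum_congr rfl fun π _ => ?_
        simp only [zsmul_eq_mul]
        ring
    _ = ∑ c ∈ A with Function.Injective c,
          Nat.multinomial univ c * (∏ i, x i ^ c i) * det (of fun a b => y a ^ c b) :=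
        (sum_filter_of_ne fun c _ h => by_contra fun hc =>
          h (by rw [det_of_pow_eq_zero_of_not_injective y hc, mul_zero])).symm
    _ = ∑ σ : Perm (Fin k), Nat.multinomial (range k) id * (∏ i, x i ^ (σ i : ℕ)) *
          ((Perm.sign σ : ℤ) * det (vandermonde y)) := by
        rw [Fin.filter_injective_piAntidiag_choose_two, sum_image fun σ _ τ _ h =>
          Equiv.ext fun i => Fin.val_injective (congrFun h i)]
        refine sum_congr rfl fun σ _ => ?_
        rw [det_of_pow_perm, ← Nat.multinomial_univ_fin_val,
          ← Nat.multinomial_univ_comp_equiv σ fun i => (i : ℕ)]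
        rfl
    _ = Nat.multinomial (range k) id * det (vandermonde x) * det (vandermonde y) := by
        rw [det_vandermonde_eq_sum_sign x, mul_sum, sum_mul]
        refine sum_congr rfl fun σ _ => ?_
        rw [Units.smul_def, zsmul_eq_mul]
        ring

theorem Finset.prod_filter_fst_lt_snd {ι M : Type*} [Fintype ι] [LinearOrder ι]
    [LocallyFiniteOrderTop ι] [CommMonoid M] (f : ι × ι → M) :
    ∏ p with p.1 < p.2, f p = ∏ i, ∏ j ∈ Ioi i, f (i, j) :=
  prod_finset_product _ _ _ fun p => by simp

theorem flag_degree_antisymmetrization_general {F : Type*} [Field F]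
    (k : ℕ) (d : ℕ) (hd : d = k.choose 2) :
    ∑ π : Equiv.Perm (Fin k),
        (Equiv.Perm.sign π : ℤ) •
          (∑ i, (MvPolynomial.X (Sum.inl i) : MvPolynomial (Fin k ⊕ Fin k) F) *
            MvPolynomial.X (Sum.inr (π i))) ^ d =
      ((Nat.multinomial (Finset.range k) id : ℕ) : MvPolynomial (Fin k ⊕ Fin k) F) *
        (∏ p ∈ Finset.univ.filter (fun p : Fin k × Fin k => p.1 < p.2),
          (MvPolynomial.X (Sum.inl p.2) - MvPolynomial.X (Sum.inl p.1))) *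
        (∏ p ∈ Finset.univ.filter (fun p : Fin k × Fin k => p.1 < p.2),
          (MvPolynomial.X (Sum.inr p.2) - MvPolynomial.X (Sum.inr p.1))) := by
  subst hd
  rw [prod_filter_fst_lt_snd, prod_filter_fst_lt_snd]
  simpa only [det_vandermonde] using sum_sign_smul_sum_mul_pow_choose_two
    (fun i => (MvPolynomial.X (Sum.inl i) : MvPolynomial (Fin k ⊕ Fin k) F))
    (fun i => MvPolynomial.X (Sum.inr i))

theorem flag_degree_antisymmetrization {F : Type*} [Field F] [CharZero F]
    (k : ℕ) (hk : 1 ≤ k) (d : ℕ) (hd : d = k.choose 2) :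
    ∑ π : Equiv.Perm (Fin k),
        (Equiv.Perm.sign π : ℤ) •
          (∑ i, (MvPolynomial.X (Sum.inl i) : MvPolynomial (Fin k ⊕ Fin k) F) *
            MvPolynomial.X (Sum.inr (π i))) ^ d =
      ((Nat.multinomial (Finset.range k) id : ℕ) : MvPolynomial (Fin k ⊕ Fin k) F) *
        (∏ p ∈ Finset.univ.filter (fun p : Fin k × Fin k => p.1 < p.2),
          (MvPolynomial.X (Sum.inl p.2) - MvPolynomial.X (Sum.inl p.1))) *
        (∏ p ∈ Finset.univ.filter (fun p : Fin k × Fin k => p.1 < p.2),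
          (MvPolynomial.X (Sum.inr p.2) - MvPolynomial.X (Sum.inr p.1))) :=
  flag_degree_antisymmetrization_general k d hd
end

section
/- Let k ≥ 1 and let b = (b_1,...,b_{k-1}) be a sequence of nonnegative integers. Define a bipartite graph B_b with upper class U = { (j,l) : 1 ≤ j ≤ l ≤ k-1 }, lower class D_b = { (i,t) : 1 ≤ i ≤ k-1, 1 ≤ t ≤ b_i }, and an edge between (j,l) and (i,t) iff j ≤ i ≤ l. Then B_b has a matching covering D_b if and only if for every subset P ⊆ {1,...,k-1}, Σ_{p ∈ P} b_p ≤ K(P), where K(P) is the number of pairs (i,j) with 1 ≤ i ≤ j ≤ k-1 such that some p ∈ P satisfies i ≤ p ≤ j. -/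
/-!
All `b i` copies `(i, t)` of a lower vertex have the same neighbourhood `N i`, so Hall's condition
only has to be checked on unions of whole blocks `{i} × Fin (b i)`, where it reads
`∑ i ∈ P, b i ≤ #(⋃ i ∈ P, N i)`. In `B_b` the neighbourhood of `i` is the set of intervals
`[j, l]` containing `i`, and their union over `P` is exactly the set counted by `K(P)`.
-/

/-- The bipartite graph `B_b` has a matching covering the lower class
`D_b = {(i,t) : t < b i}`: an injection from `D_b` into the upper class
`U = {(j,l) : j ≤ l}` sending each `(i,t)` to a pair `(j,l)` with `j ≤ i ≤ l`. -/
def HasLowerMatching (k : ℕ) (b : Fin (k - 1) → ℕ) : Prop :=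
  ∃ f : (Σ i : Fin (k - 1), Fin (b i)) → Fin (k - 1) × Fin (k - 1),
    Function.Injective f ∧ ∀ x, (f x).1 ≤ x.1 ∧ x.1 ≤ (f x).2

open Finset

theorem Finset.all_sum_le_biUnion_card_iff_exists_injective {ι α : Type*} [DecidableEq α]
    (N : ι → Finset α) (b : ι → ℕ) :
    (∀ P : Finset ι, ∑ i ∈ P, b i ≤ #(P.biUnion N)) ↔
      ∃ f : (Σ i, Fin (b i)) → α, Function.Injective f ∧ ∀ x, f x ∈ N x.1 := by
  classical
  rw [← all_card_le_biUnion_card_iff_exists_injective]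
  constructor
  · intro hall s
    calc #s ≤ #((s.image Sigma.fst).sigma fun i => (univ : Finset (Fin (b i)))) :=
          card_le_card fun x hx => mem_sigma.2 ⟨mem_image_of_mem _ hx, mem_univ _⟩
      _ = ∑ i ∈ s.image Sigma.fst, b i := by simp [card_sigma]
      _ ≤ #((s.image Sigma.fst).biUnion N) := hall _
      _ = #(s.biUnion fun x => N x.1) := by rw [image_biUnion]
  · intro hall P
    calc ∑ i ∈ P, b i = #(P.sigma fun i => (univ : Finset (Fin (b i)))) := by simp [card_sigma]
      _ ≤ #((P.sigma fun i => univ).biUnion fun x => N x.1) := hall _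
      _ ≤ #(P.biUnion N) := card_le_card <|
          biUnion_subset.2 fun x hx => subset_biUnion_of_mem N (mem_sigma.1 hx).1

section Intervals

variable {α : Type*} [Preorder α] [Fintype α] [DecidableEq α] [DecidableLE α]

def intervalsContaining (p : α) : Finset (α × α) :=
  univ.filter fun q => q.1 ≤ p ∧ p ≤ q.2

theorem biUnion_intervalsContaining (P : Finset α) :
    P.biUnion intervalsContaining =
      univ.filter fun q : α × α => q.1 ≤ q.2 ∧ ∃ p ∈ P, q.1 ≤ p ∧ p ≤ q.2 := by
  ext q
  simp only [intervalsContaining, mem_biUnion, mem_filter, mem_univ, true_and]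
  exact ⟨fun ⟨p, hp, h⟩ => ⟨h.1.trans h.2, p, hp, h⟩, fun ⟨_, h⟩ => h⟩

end Intervals

theorem matching_iff_hall_general (k : ℕ) (b : Fin (k - 1) → ℕ) :
    HasLowerMatching k b ↔
      ∀ P : Finset (Fin (k - 1)),
        ∑ p ∈ P, b p ≤
          (Finset.univ.filter (fun q : Fin (k - 1) × Fin (k - 1) =>
            q.1 ≤ q.2 ∧ ∃ p ∈ P, q.1 ≤ p ∧ p ≤ q.2)).card := by
  have hmatching : HasLowerMatching k b ↔
      ∃ f : (Σ i, Fin (b i)) → Fin (k - 1) × Fin (k - 1),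
        Function.Injective f ∧ ∀ x, f x ∈ intervalsContaining x.1 := by
    simp [HasLowerMatching, intervalsContaining]
  rw [hmatching, ← all_sum_le_biUnion_card_iff_exists_injective]
  simp only [biUnion_intervalsContaining]
  -- the statement decides `∃ p ∈ P, _` by `Nat.decidableExistsFin`, so the filters agree only
  -- up to the decidability instance
  convert Iff.rfl

theorem matching_iff_hall (k : ℕ) (hk : 1 ≤ k) (b : Fin (k - 1) → ℕ) :
    HasLowerMatching k b ↔
      ∀ P : Finset (Fin (k - 1)),
        ∑ p ∈ P, b p ≤
          (Finset.univ.filter (fun q : Fin (k - 1) × Fin (k - 1) =>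
            q.1 ≤ q.2 ∧ ∃ p ∈ P, q.1 ≤ p ∧ p ≤ q.2)).card :=
  matching_iff_hall_general k b
end

section
/- Let k ≥ 1 and b = (b_1,...,b_{k-1}) be nonnegative integers with Σ b_i = binom(k,2). Then the coefficient of v_1^{b_1}···v_{k-1}^{b_{k-1}} in the polynomial ∏_{1 ≤ i < j ≤ k} (v_i + v_{i+1} + ... + v_{j-1}) is nonzero if and only if for all 1 ≤ s ≤ t ≤ k-1, Σ_{j=s}^{t} b_j ≥ binom(t-s+2, 2). -/
/-!
Expanding the product, the coefficient of `v ^ b` counts the ways to choose for every pair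
`i < j` one of the variables `v i, …, v (j - 1)` such that each `v m` is chosen exactly `b m`
times; all terms have coefficient `1`, so it is nonzero iff such a choice exists. Writing the
pair `i < j` as the interval `[i, j - 1]` of indices, this is a matching problem in which an
interval may use any index it contains and index `m` has capacity `b m`. By Hall's theorem a
matching exists iff every family of intervals is no larger than the total capacity of its union.
The stated inequalities are this condition for the family of all subintervals of `[s, t]`;
conversely, every interval inside a set `U` lies in one maximal run of `U`, so the inequalities
for the runs give Hall's condition for every family.
-/

open Finset MvPolynomial

theorem MvPolynomial.coeff_prod_sum_X_ne_zero_iff {ι σ R : Type*} [Fintype ι] [DecidableEq σ]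
    [CommSemiring R] [CharZero R] (t : ι → Finset σ) (d : σ →₀ ℕ) :
    coeff d (∏ i, ∑ l ∈ t i, (X l : MvPolynomial σ R)) ≠ 0 ↔
      ∃ g : ι → σ, (∀ i, g i ∈ t i) ∧ ∀ m, #{i | g i = m} = d m := by
  classical
  have monomial_eq (g : ι → σ) :
      ∏ i, (X (g i) : MvPolynomial σ R) = monomial (∑ i, Finsupp.single (g i) 1) 1 := by
    rw [monomial_sum_one]; rfl
  have exponent_eq_iff (g : ι → σ) :
      ∑ i, Finsupp.single (g i) 1 = d ↔ ∀ m, #{i | g i = m} = d m := by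
    simp only [Finsupp.ext_iff, Finsupp.finsetSum_apply, Finsupp.single_apply, card_filter]
  rw [prod_univ_sum, coeff_sum]
  simp only [monomial_eq, coeff_monomial, sum_boole, Nat.cast_ne_zero, card_ne_zero,
    filter_nonempty_iff, Fintype.mem_piFinset, exponent_eq_iff]

theorem Finset.forall_card_le_sum_biUnion_iff_exists_fiber_card_eq {ι σ : Type*} [Fintype ι]
    [Fintype σ] [DecidableEq σ] (t : ι → Finset σ) (b : σ → ℕ)
    (hb : ∑ m, b m = Fintype.card ι) :
    (∀ A : Finset ι, #A ≤ ∑ m ∈ A.biUnion t, b m) ↔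
      ∃ g : ι → σ, (∀ i, g i ∈ t i) ∧ ∀ m, #{i | g i = m} = b m := by
  constructor
  · intro hall
    -- Hall's theorem, applied to `b m` copies `⟨m, r⟩` of each `m`
    obtain ⟨f, hf_inj, hf_mem⟩ := (all_card_le_biUnion_card_iff_exists_injective
      fun i => (t i).sigma fun m => range (b m)).1 fun A => by
        have copies_eq : A.biUnion (fun i => (t i).sigma fun m => range (b m)) =
            (A.biUnion t).sigma fun m => range (b m) := by
          ext; simp only [mem_biUnion, mem_sigma]; tauto
        simpa only [copies_eq, card_sigma, card_range] using hall A
    simp only [mem_sigma, mem_range] at hf_mem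
    have fiber_le (m : σ) : #{i | (f i).1 = m} ≤ b m := by
      rw [← card_range (b m)]
      refine card_le_card_of_injOn (fun i => (f i).2) (fun i hi => ?_) fun i hi j hj hij => ?_
      · rw [mem_coe, mem_filter] at hi
        exact mem_range.2 (hi.2 ▸ (hf_mem i).2)
      · rw [mem_coe, mem_filter] at hi hj
        exact hf_inj (Sigma.ext (hi.2.trans hj.2.symm) (heq_of_eq hij))
    refine ⟨fun i => (f i).1, fun i => (hf_mem i).1, fun m => ?_⟩
    refine (sum_eq_sum_iff_of_le fun m _ => fiber_le m).1 ?_ m (mem_univ m)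
    rw [hb, ← card_univ (α := ι), card_eq_sum_card_fiberwise fun i _ => mem_univ (f i).1]
  · rintro ⟨g, hg_mem, hg_card⟩ A
    calc #A = ∑ m ∈ A.biUnion t, #{i ∈ A | g i = m} :=
          card_eq_sum_card_fiberwise fun i hi => mem_biUnion.2 ⟨i, hi, hg_mem i⟩
      _ ≤ ∑ m ∈ A.biUnion t, b m := sum_le_sum fun m _ =>
          hg_card m ▸ card_le_card (filter_subset_filter _ (subset_univ A))

namespace Finset

variable {α : Type*} [LinearOrder α]

theorem card_filter_fst_le_snd (s : Finset α) :
    #{p ∈ s ×ˢ s | p.1 ≤ p.2} = (#s + 1).choose 2 := by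
  rw [← card_sym2]
  refine card_nbij' (fun p => s(p.1, p.2)) (fun z => (z.inf, z.sup)) ?_ ?_ ?_ ?_
  · intro p hp
    simp_all
  · intro z hz
    induction z using Sym2.ind with | _ a b
    rw [mem_coe, mk_mem_sym2_iff] at hz
    rcases le_total a b with h | h <;> simp [h, hz.1, hz.2]
  · intro p hp
    simp_all
  · intro z _
    exact Sym2.sortEquiv.symm_apply_apply z

variable [LocallyFiniteOrder α]

def subintervals (U : Finset α) : Finset (α × α) :=
  {p ∈ U ×ˢ U | p.1 ≤ p.2 ∧ Icc p.1 p.2 ⊆ U}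

@[simp]
theorem mem_subintervals {U : Finset α} {p : α × α} :
    p ∈ subintervals U ↔ p.1 ≤ p.2 ∧ Icc p.1 p.2 ⊆ U := by
  refine ⟨fun h => (mem_filter.1 h).2, fun h => mem_filter.2 ⟨?_, h⟩⟩
  exact mem_product.2 ⟨h.2 (left_mem_Icc.2 h.1), h.2 (right_mem_Icc.2 h.1)⟩

theorem card_subintervals_Icc (s t : α) :
    #(subintervals (Icc s t)) = (#(Icc s t) + 1).choose 2 := by
  rw [← card_filter_fst_le_snd]
  congr 1
  ext p
  simp only [mem_subintervals, mem_filter, mem_product]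
  constructor
  · rintro ⟨hp, hsub⟩
    exact ⟨⟨hsub (left_mem_Icc.2 hp), hsub (right_mem_Icc.2 hp)⟩, hp⟩
  · rintro ⟨⟨h1, h2⟩, hp⟩
    exact ⟨hp, Icc_subset_Icc (mem_Icc.1 h1).1 (mem_Icc.1 h2).2⟩

theorem subintervals_subset_union {U : Finset α} {s t : α} (hI : Icc s t ⊆ U)
    (ht : ∀ x ∈ U, x ≤ t) (hs : ∀ r < s, ¬Icc r t ⊆ U) :
    subintervals U ⊆ subintervals (U \ Icc s t) ∪ subintervals (Icc s t) := by
  rintro ⟨i, j⟩ hij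
  rw [mem_subintervals] at hij
  obtain ⟨hij, hIcc⟩ := hij
  have hjt : j ≤ t := ht j (hIcc (right_mem_Icc.2 hij))
  rw [mem_union, mem_subintervals, mem_subintervals]
  rcases le_or_gt s i with hsi | his
  · exact Or.inr ⟨hij, Icc_subset_Icc hsi hjt⟩
  · have hjs : j < s := by
      by_contra! hsj
      refine hs i his fun x hx => ?_
      rcases le_or_gt x j with hxj | hjx
      · exact hIcc (mem_Icc.2 ⟨(mem_Icc.1 hx).1, hxj⟩)
      · exact hI (mem_Icc.2 ⟨hsj.trans hjx.le, (mem_Icc.1 hx).2⟩)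
    refine Or.inl ⟨hij, fun x hx => mem_sdiff.2 ⟨hIcc hx, fun hx' => ?_⟩⟩
    exact absurd ((mem_Icc.1 hx').1.trans (mem_Icc.1 hx).2) (not_le.2 hjs)

theorem card_subintervals_le_sum (b : α → ℕ)
    (hb : ∀ s t, s ≤ t → #(subintervals (Icc s t)) ≤ ∑ l ∈ Icc s t, b l)
    (U : Finset α) :
    #(subintervals U) ≤ ∑ l ∈ U, b l := by
  induction U using Finset.strongInduction with | H U ih =>
  rcases U.eq_empty_or_nonempty with rfl | hU
  · simp [subintervals]
  -- remove the maximal run `Icc s t` at the top of `U`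
  set t := U.max' hU
  have ht : t ∈ U := U.max'_mem hU
  have hruns : ({r ∈ U | Icc r t ⊆ U}).Nonempty := ⟨t, by simp [ht]⟩
  set s := ({r ∈ U | Icc r t ⊆ U}).min' hruns
  have hI : Icc s t ⊆ U := (mem_filter.1 (min'_mem _ hruns)).2
  have hst : s ≤ t := U.le_max' _ (mem_filter.1 (min'_mem _ hruns)).1
  have hs : ∀ r < s, ¬Icc r t ⊆ U := fun r hrs hr =>
    not_le.2 hrs (min'_le _ r (mem_filter.2 ⟨hr (left_mem_Icc.2 (hrs.le.trans hst)), hr⟩))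
  calc #(subintervals U)
      ≤ #(subintervals (U \ Icc s t) ∪ subintervals (Icc s t)) :=
        card_le_card (subintervals_subset_union hI (fun x hx => U.le_max' x hx) hs)
    _ ≤ #(subintervals (U \ Icc s t)) + #(subintervals (Icc s t)) := card_union_le _ _
    _ ≤ ∑ l ∈ U \ Icc s t, b l + ∑ l ∈ Icc s t, b l :=
        add_le_add (ih _ (sdiff_ssubset hI ⟨t, right_mem_Icc.2 hst⟩)) (hb s t hst)
    _ = ∑ l ∈ U, b l := sum_sdiff hI

theorem forall_card_le_sum_biUnion_Icc_iff (b : α → ℕ) :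
    (∀ A : Finset {p : α × α // p.1 ≤ p.2},
        #A ≤ ∑ l ∈ A.biUnion (fun p => Icc p.1.1 p.1.2), b l) ↔
      ∀ s t, s ≤ t → #(subintervals (Icc s t)) ≤ ∑ l ∈ Icc s t, b l := by
  constructor
  · intro hall s t _
    let A := (subintervals (Icc s t)).subtype fun p => p.1 ≤ p.2
    calc #(subintervals (Icc s t)) = #A := by
          rw [card_subtype, filter_true_of_mem fun p hp => (mem_subintervals.1 hp).1]
      _ ≤ ∑ l ∈ A.biUnion (fun p => Icc p.1.1 p.1.2), b l := hall A
      _ ≤ ∑ l ∈ Icc s t, b l := sum_le_sum_of_subset <| biUnion_subset.2 fun p hp =>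
          (mem_subintervals.1 (mem_subtype.1 hp)).2
  · intro hb A
    calc #A = #(A.map (Function.Embedding.subtype _)) := (card_map _).symm
      _ ≤ #(subintervals (A.biUnion fun p => Icc p.1.1 p.1.2)) := by
        refine card_le_card fun p hp => ?_
        obtain ⟨p, hpA, rfl⟩ := mem_map.1 hp
        exact mem_subintervals.2 ⟨p.2, subset_biUnion_of_mem (fun p => Icc p.1.1 p.1.2) hpA⟩
      _ ≤ _ := card_subintervals_le_sum b hb _

end Finset

theorem MvPolynomial.coeff_prod_sum_X_Icc_ne_zero_iff {α R : Type*} [LinearOrder α]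
    [LocallyFiniteOrder α] [Fintype α] [CommSemiring R] [CharZero R] (b : α →₀ ℕ)
    (hb : ∑ l, b l = (Fintype.card α + 1).choose 2) :
    coeff b (∏ p : {p : α × α // p.1 ≤ p.2},
        ∑ l ∈ Icc p.1.1 p.1.2, (X l : MvPolynomial α R)) ≠ 0 ↔
      ∀ s t, s ≤ t → (#(Icc s t) + 1).choose 2 ≤ ∑ l ∈ Icc s t, b l := by
  have card_pairs :
      Fintype.card {p : α × α // p.1 ≤ p.2} = (Fintype.card α + 1).choose 2 := by
    rw [← Fintype.card_congr Sym2.sortEquiv, Sym2.card]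
  simp_rw [← card_subintervals_Icc]
  rw [coeff_prod_sum_X_ne_zero_iff, ← forall_card_le_sum_biUnion_iff_exists_fiber_card_eq _ _
    (hb.trans card_pairs.symm), forall_card_le_sum_biUnion_Icc_iff]

theorem Fin.prod_filter_lt_eq_prod_Icc_pred {M : Type*} [CommMonoid M] (k : ℕ)
    (f : Finset (Fin (k - 1)) → M) :
    ∏ q ∈ univ.filter (fun q : Fin k × Fin k => q.1 < q.2),
        f (univ.filter fun l : Fin (k - 1) => (q.1 : ℕ) ≤ l ∧ (l : ℕ) < q.2) =
      ∏ p : {p : Fin (k - 1) × Fin (k - 1) // p.1 ≤ p.2}, f (Icc p.1.1 p.1.2) := by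
  refine prod_bij' (fun q hq => ⟨(⟨q.1, ?_⟩, ⟨q.2 - 1, ?_⟩), ?_⟩)
    (fun p _ => (⟨p.1.1, ?_⟩, ⟨p.1.2 + 1, ?_⟩)) (fun _ _ => mem_univ _) ?_ ?_ ?_
    fun q hq => congrArg f <| by
      ext l
      simp only [mem_filter, mem_univ, true_and, mem_Icc, Fin.le_def, Fin.lt_def] at hq ⊢
      omega
  all_goals grind

open scoped Classical

theorem perfect_matching_coeff_iff_general (k : ℕ)
    (b : Fin (k - 1) → ℕ) (hsum : ∑ i, b i = k.choose 2) :
    MvPolynomial.coeff (Finsupp.equivFunOnFinite.symm b)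
      (∏ q ∈ Finset.univ.filter (fun q : Fin k × Fin k => q.1 < q.2),
        ∑ l ∈ Finset.univ.filter
            (fun l : Fin (k - 1) => (q.1 : ℕ) ≤ (l : ℕ) ∧ (l : ℕ) < (q.2 : ℕ)),
          (MvPolynomial.X l : MvPolynomial (Fin (k - 1)) ℤ)) ≠ 0 ↔
    ∀ s t : Fin (k - 1), s ≤ t →
      ((t : ℕ) - (s : ℕ) + 2).choose 2 ≤
        ∑ j ∈ Finset.univ.filter (fun j : Fin (k - 1) => s ≤ j ∧ j ≤ t), b j := by
  rw [Fin.prod_filter_lt_eq_prod_Icc_pred k fun s => ∑ l ∈ s, X l,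
    coeff_prod_sum_X_Icc_ne_zero_iff]
  · refine forall₂_congr fun s t => imp_congr_right fun hst => ?_
    rw [Fin.card_Icc, filter_le_le_eq_Icc, Finsupp.coe_equivFunOnFinite_symm,
      show (t : ℕ) + 1 - s + 1 = t - s + 2 by omega]
  · rw [Finsupp.coe_equivFunOnFinite_symm, hsum, Fintype.card_fin]
    -- `k - 1 + 1 = k` fails only for `k = 0`, where both binomials vanish
    cases k <;> rfl

theorem perfect_matching_coeff_iff (k : ℕ) (hk : 1 ≤ k)
    (b : Fin (k - 1) → ℕ) (hsum : ∑ i, b i = k.choose 2) :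
    MvPolynomial.coeff (Finsupp.equivFunOnFinite.symm b)
      (∏ q ∈ Finset.univ.filter (fun q : Fin k × Fin k => q.1 < q.2),
        ∑ l ∈ Finset.univ.filter
            (fun l : Fin (k - 1) => (q.1 : ℕ) ≤ (l : ℕ) ∧ (l : ℕ) < (q.2 : ℕ)),
          (MvPolynomial.X l : MvPolynomial (Fin (k - 1)) ℤ)) ≠ 0 ↔
    ∀ s t : Fin (k - 1), s ≤ t →
      ((t : ℕ) - (s : ℕ) + 2).choose 2 ≤
        ∑ j ∈ Finset.univ.filter (fun j : Fin (k - 1) => s ≤ j ∧ j ≤ t), b j :=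
  perfect_matching_coeff_iff_general k b hsum
end

section
/- Let k ≥ 1 and b = (b_1,...,b_{k-1}) a sequence of nonnegative integers that is admissible, i.e., for all distinct integers a_1,...,a_k and all sets of integers M_1,...,M_{k-1} with |M_i| = b_i there is a permutation π ∈ S_k with a_{π(1)}+...+a_{π(i)} ∉ M_i for all i. Then for every subset P ⊆ {1,...,k-1}, Σ_{p ∈ P} b_p ≤ K(P), where K(P) is the number of pairs (i,j) with 1 ≤ i ≤ j ≤ k-1 for which some p ∈ P satisfies i ≤ p ≤ j. -/
/-!
Take `a_j = j + 1`, so that the `c`-th prefix sum of a permutation is a sum of `c` distinct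
elements of `{1, …, k}`: its excess `E_c` over `1 + ⋯ + c` is nonnegative, and a block of `d`
positions ending at `c` raises it by at most `d (k - c)`. For `p ∈ P` (indexed from `0`) take
`M_p = (L_p + t_p, L_p + t_p + b_p]` with `L_p = 1 + ⋯ + (p + 1)` and
`t_p = K(P ∩ [0, p]) - ∑_{q ∈ P, q ≤ p} b_q`. Going through `P` in increasing order, the increment
bound gives `E_{p+1} ≤ t_p + b_p`, because `d (k - c)` counts exactly the intervals that `p` newly
meets; avoiding `M_p` then forces `E_{p+1} ≤ t_p`. At `p = max P` this says `0 ≤ K(P) - ∑_P b`.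
-/

open Finset

namespace Finset
variable {α : Type*} {s : Finset α} {f : α → ℤ} {c : ℤ}

lemma sum_le_sum_range_of_injOn (hf : Set.InjOn f s) (hc : ∀ x ∈ s, f x ≤ c) :
    ∑ x ∈ s, f x ≤ ∑ n ∈ range #s, (c - n) := by
  classical
  simpa only [sum_image hf, card_image_of_injOn hf] using
    sum_le_sum_range (s := s.image f) (by simpa using hc)

lemma sum_range_le_sum_of_injOn (hf : Set.InjOn f s) (hc : ∀ x ∈ s, c ≤ f x) :
    ∑ n ∈ range #s, (c + n) ≤ ∑ x ∈ s, f x := by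
  classical
  simpa only [sum_image hf, card_image_of_injOn hf] using
    sum_range_le_sum (s := s.image f) (by simpa using hc)

lemma two_mul_sum_range_natCast (d : ℕ) : 2 * ∑ n ∈ range d, (n : ℤ) = d * (d - 1) := by
  induction d with
  | zero => simp
  | succ d ih => rw [sum_range_succ]; push_cast; linarith

end Finset

section PrefixDisplacement
variable {k : ℕ}

def firstIndices (k c : ℕ) : Finset (Fin k) := {j | (j : ℕ) < c}

lemma card_firstIndices {c : ℕ} (hc : c ≤ k) : #(firstIndices k c) = c := by
  rw [firstIndices, Fin.card_filter_val_lt, min_eq_right hc]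

lemma firstIndices_mono {c' c : ℕ} (h : c' ≤ c) : firstIndices k c' ⊆ firstIndices k c :=
  fun _ hj => by simp only [firstIndices, mem_filter_univ] at hj ⊢; omega

variable (σ : Equiv.Perm (Fin k))

def prefixDisplacement (c : ℕ) : ℤ :=
  ∑ j ∈ firstIndices k c, (((σ j : ℕ) : ℤ) - (j : ℕ))

lemma prefixDisplacement_nonneg {c : ℕ} (hc : c ≤ k) : 0 ≤ prefixDisplacement σ c := by
  have hσ := sum_range_le_sum_of_injOn (s := firstIndices k c) (f := fun j => ((σ j : ℕ) : ℤ))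
    (Nat.cast_injective.comp (Fin.val_injective.comp σ.injective)).injOn (c := 0)
    (fun _ _ => by positivity)
  have hid := sum_le_sum_range_of_injOn (s := firstIndices k c) (f := fun j => ((j : ℕ) : ℤ))
    (Nat.cast_injective.comp Fin.val_injective).injOn (c := c - 1)
    (fun j hj => by simp [firstIndices] at hj; omega)
  have hgauss := two_mul_sum_range_natCast c
  rw [card_firstIndices hc] at hσ hid
  simp only [zero_add, sum_sub_distrib, sum_const, card_range, nsmul_eq_mul] at hσ hid
  rw [prefixDisplacement, sum_sub_distrib]
  linarith

lemma prefixDisplacement_le {c' c : ℕ} (hc' : c' ≤ c) (hc : c ≤ k) :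
    prefixDisplacement σ c ≤ prefixDisplacement σ c' + ((c - c') * (k - c) : ℕ) := by
  set B := firstIndices k c \ firstIndices k c'
  have hsub := firstIndices_mono (k := k) hc'
  have hB : #B = c - c' := by
    rw [card_sdiff_of_subset hsub, card_firstIndices hc, card_firstIndices (hc'.trans hc)]
  have hσ := sum_le_sum_range_of_injOn (s := B) (f := fun j => ((σ j : ℕ) : ℤ))
    (Nat.cast_injective.comp (Fin.val_injective.comp σ.injective)).injOn (c := k - 1)
    (fun j _ => by have := (σ j).isLt; omega)
  have hid := sum_range_le_sum_of_injOn (s := B) (f := fun j => ((j : ℕ) : ℤ))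
    (Nat.cast_injective.comp Fin.val_injective).injOn (c := c')
    (fun j hj => by simp [B, firstIndices] at hj; omega)
  have hgauss := two_mul_sum_range_natCast (c - c')
  have hsplit : prefixDisplacement σ c - prefixDisplacement σ c' =
      ∑ j ∈ B, ((σ j : ℕ) : ℤ) - ∑ j ∈ B, ((j : ℕ) : ℤ) := by
    rw [← sum_sub_distrib, sum_sdiff_eq_sub hsub]; rfl
  rw [hB] at hσ hid
  simp only [sum_sub_distrib, sum_add_distrib, sum_const, card_range, nsmul_eq_mul] at hσ hid
  push_cast [hc', hc] at hσ hid hgauss ⊢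
  linarith

end PrefixDisplacement

section IntervalsMeeting
variable {n : ℕ}

def intervalsMeeting (Q : Finset (Fin n)) : Finset (Fin n × Fin n) :=
  {q | q.1 ≤ q.2 ∧ ∃ p ∈ Q, q.1 ≤ p ∧ p ≤ q.2}

def supSucc (Q : Finset (Fin n)) : ℕ := Q.sup fun q => (q : ℕ) + 1

lemma supSucc_le_iff {Q : Finset (Fin n)} {m : ℕ} : supSucc Q ≤ m ↔ ∀ q ∈ Q, (q : ℕ) < m :=
  Finset.sup_le_iff

lemma supSucc_le (Q : Finset (Fin n)) : supSucc Q ≤ n :=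
  supSucc_le_iff.2 fun q _ => q.isLt

lemma intervalsMeeting_insert {Q : Finset (Fin n)} {a : Fin n} (ha : ∀ q ∈ Q, q < a) :
    intervalsMeeting (insert a Q) = intervalsMeeting Q ∪
      (firstIndices n (a + 1) \ firstIndices n (supSucc Q)) ×ˢ Ici a := by
  ext ⟨i, j⟩
  simp only [intervalsMeeting, firstIndices, mem_union, mem_filter_univ, mem_product, mem_sdiff,
    mem_Ici, exists_mem_insert, not_lt, supSucc_le_iff]
  constructor
  · rintro ⟨hij, ⟨hia, haj⟩ | hQ⟩
    · by_cases h : ∃ p ∈ Q, i ≤ p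
      · obtain ⟨p, hp, hip⟩ := h
        exact Or.inl ⟨hij, p, hp, hip, (ha p hp).le.trans haj⟩
      · push Not at h
        exact Or.inr ⟨⟨Nat.lt_succ_of_le hia, h⟩, haj⟩
    · exact Or.inl ⟨hij, hQ⟩
  · rintro (⟨hij, hQ⟩ | ⟨⟨hia, -⟩, haj⟩)
    · exact ⟨hij, Or.inr hQ⟩
    · have hia : i ≤ a := Nat.le_of_lt_succ hia
      exact ⟨hia.trans haj, Or.inl ⟨hia, haj⟩⟩

lemma card_intervalsMeeting_insert {Q : Finset (Fin n)} {a : Fin n} (ha : ∀ q ∈ Q, q < a) :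
    #(intervalsMeeting (insert a Q)) =
      #(intervalsMeeting Q) + (a + 1 - supSucc Q) * (n - a) := by
  have hQa : supSucc Q ≤ a := supSucc_le_iff.2 ha
  rw [intervalsMeeting_insert ha, card_union_of_disjoint, card_product, Fin.card_Ici,
    card_sdiff_of_subset (firstIndices_mono (by omega)), card_firstIndices a.isLt,
    card_firstIndices (by omega)]
  · rw [disjoint_left]
    rintro ⟨i, j⟩ hQ hnew
    simp only [intervalsMeeting, firstIndices, mem_filter_univ, mem_product, mem_sdiff, not_lt,
      supSucc_le_iff] at hQ hnew
    obtain ⟨-, p, hp, hip, -⟩ := hQ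
    exact absurd (hnew.1.2 p hp) (not_lt.2 hip)

end IntervalsMeeting

section Threshold
variable {n : ℕ} (b : Fin n → ℕ)

def threshold (Q : Finset (Fin n)) : ℤ := #(intervalsMeeting Q) - ∑ q ∈ Q, (b q : ℤ)

lemma threshold_insert {Q : Finset (Fin n)} {a : Fin n} (ha : ∀ q ∈ Q, q < a) :
    threshold b (insert a Q) + b a = threshold b Q + ((a + 1 - supSucc Q) * (n - a) : ℕ) := by
  have haQ : a ∉ Q := fun h => lt_irrefl a (ha a h)
  rw [threshold, threshold, card_intervalsMeeting_insert ha, sum_insert haQ]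
  push_cast
  ring

theorem le_threshold_of_forall_notMem_Ioc (E : ℕ → ℤ) (hE₀ : E 0 ≤ 0)
    (hE : ∀ (a : Fin n) (c : ℕ), c ≤ a → E (a + 1) ≤ E c + ((a + 1 - c) * (n - a) : ℕ))
    (Q : Finset (Fin n))
    (hQ : ∀ a ∈ Q, E (a + 1) ∉
      Ioc (threshold b {q ∈ Q | q ≤ a}) (threshold b {q ∈ Q | q ≤ a} + b a)) :
    E (supSucc Q) ≤ threshold b Q := by
  induction Q using Finset.induction_on_max with
  | empty => simpa [supSucc, threshold, intervalsMeeting] using hE₀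
  | insert a s ha ih =>
    have hs : ∀ q ∈ s, {x ∈ insert a s | x ≤ q} = {x ∈ s | x ≤ q} := fun q hq => by
      rw [filter_insert, if_neg (ha q hq).not_ge]
    have hle : ∀ x ∈ insert a s, x ≤ a := fun x hx =>
      (mem_insert.1 hx).elim le_of_eq fun h => (ha x h).le
    have hsa : {x ∈ insert a s | x ≤ a} = insert a s := filter_true_of_mem hle
    have hsup : supSucc (insert a s) = a + 1 :=
      le_antisymm (supSucc_le_iff.2 fun x hx => Nat.lt_succ_of_le (hle x hx))
        (le_sup (f := fun q : Fin n => (q : ℕ) + 1) (mem_insert_self a s))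
    have ih := ih fun q hq => hs q hq ▸ hQ q (mem_insert_of_mem hq)
    have hstep := hE a (supSucc s) (supSucc_le_iff.2 ha)
    have havoid := hQ a (mem_insert_self a s)
    rw [hsa, mem_Ioc] at havoid
    have hinsert := threshold_insert b ha
    rw [hsup]
    by_contra h
    exact havoid ⟨not_le.1 h, by linarith⟩

end Threshold

theorem grasshopper_admissible_matching_general (k : ℕ)
    (b : Fin (k - 1) → ℕ)
    (hadm : ∀ a : Fin k → ℤ, Function.Injective a →
      ∀ M : Fin (k - 1) → Finset ℤ, (∀ i, (M i).card = b i) →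
        ∃ π : Equiv.Perm (Fin k), ∀ i : Fin (k - 1),
          (∑ j ∈ Finset.univ.filter (fun j : Fin k => (j : ℕ) ≤ (i : ℕ)), a (π j)) ∉ M i) :
    ∀ P : Finset (Fin (k - 1)),
      ∑ p ∈ P, b p ≤
        (Finset.univ.filter (fun q : Fin (k - 1) × Fin (k - 1) =>
          q.1 ≤ q.2 ∧ ∃ p ∈ P, q.1 ≤ p ∧ p ≤ q.2)).card := by
  intro P
  set base : Fin (k - 1) → ℤ := fun i => ∑ j ∈ firstIndices k (i + 1), (((j : ℕ) : ℤ) + 1)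
  set t : Fin (k - 1) → ℤ := fun i => threshold b {q ∈ P | q ≤ i}
  obtain ⟨π, hπ⟩ := hadm (fun j => (j : ℕ) + 1) (fun i j h => Fin.ext (by simpa using h))
    (fun i => Ioc (base i + t i) (base i + t i + b i)) (fun i => by simp)
  have hprefix (i : Fin (k - 1)) :
      ∑ j ∈ univ.filter (fun j : Fin k => (j : ℕ) ≤ i), (((π j : ℕ) : ℤ) + 1) =
        base i + prefixDisplacement π (i + 1) := by
    rw [prefixDisplacement, ← sum_add_distrib]
    exact sum_congr (by ext; simp [firstIndices]) fun _ _ => by ring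
  have hE := le_threshold_of_forall_notMem_Ioc b (prefixDisplacement π)
    (by simp [prefixDisplacement, firstIndices])
    (fun a c hc => by
      simpa only [show k - (a + 1) = k - 1 - a by omega] using
        prefixDisplacement_le π (by omega : c ≤ a + 1) (by omega : (a : ℕ) + 1 ≤ k))
    P (fun a _ h => hπ a <| by
      rw [hprefix, mem_Ioc]
      exact ⟨by linarith [(mem_Ioc.1 h).1], by linarith [(mem_Ioc.1 h).2]⟩)
  have hP := (prefixDisplacement_nonneg π ((supSucc_le P).trans (Nat.sub_le k 1))).trans hE
  rw [threshold, sub_nonneg] at hP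
  exact_mod_cast hP

theorem grasshopper_admissible_matching (k : ℕ) (hk : 1 ≤ k)
    (b : Fin (k - 1) → ℕ)
    (hadm : ∀ a : Fin k → ℤ, Function.Injective a →
      ∀ M : Fin (k - 1) → Finset ℤ, (∀ i, (M i).card = b i) →
        ∃ π : Equiv.Perm (Fin k), ∀ i : Fin (k - 1),
          (∑ j ∈ Finset.univ.filter (fun j : Fin k => (j : ℕ) ≤ (i : ℕ)), a (π j)) ∉ M i) :
    ∀ P : Finset (Fin (k - 1)),
      ∑ p ∈ P, b p ≤
        (Finset.univ.filter (fun q : Fin (k - 1) × Fin (k - 1) =>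
          q.1 ≤ q.2 ∧ ∃ p ∈ P, q.1 ≤ p ∧ p ≤ q.2)).card :=
  grasshopper_admissible_matching_general k b hadm
end

section
/- For integers 1 ≤ v ≤ k-1, the sequence b = (1, 2, ..., v-1, v(k-v), k-v-1, k-v-2, ..., 2, 1) of length k-1 satisfies Σ_{j=s}^{t} b_j ≥ binom(t-s+2, 2) for all 1 ≤ s ≤ t ≤ k-1 and Σ_j b_j = binom(k,2); i.e., it is a perfect matching sequence. -/
/-!
On an interval `[s, t]`, the tent with peak `m ∈ [s, t]`, namely
`1, 2, …, m - s, (m - s + 1)(t - m + 1), t - m, …, 2, 1`, sums to exactly `C(t - s + 2, 2)`,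
since `C(a + c, 2) = C(a, 2) + a c + C(c, 2)`. The sequence `b` is the tent on `[1, k - 1]`
with peak `v`, which gives the total, and on any `[s, t]` it dominates the tent whose peak is
`v` clamped into `[s, t]`.
-/

open Finset

theorem Nat.add_choose_two (a c : ℕ) : (a + c).choose 2 = a.choose 2 + a * c + c.choose 2 := by
  induction c with
  | zero => simp
  | succ c ih =>
    rw [← add_assoc, Nat.choose_succ_succ', ih, Nat.choose_succ_succ', Nat.choose_one_right,
      Nat.choose_one_right]
    ring

theorem Finset.sum_range_add_one_eq_choose_two (n : ℕ) :
    ∑ i ∈ range n, (i + 1) = (n + 1).choose 2 := by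
  induction n with
  | zero => simp
  | succ n ih =>
    rw [sum_range_succ, ih, Nat.choose_succ_succ' (n + 1), Nat.choose_one_right, add_comm]

theorem Finset.sum_Ico_sub_add_one_eq_choose_two (s m : ℕ) :
    ∑ j ∈ Ico s m, (j - s + 1) = (m - s + 1).choose 2 := by
  rw [sum_Ico_eq_sum_range, ← sum_range_add_one_eq_choose_two]
  exact sum_congr rfl fun i _ => by omega

theorem Finset.sum_Ioc_add_one_sub_eq_choose_two (m t : ℕ) :
    ∑ j ∈ Ioc m t, (t + 1 - j) = (t - m + 1).choose 2 := by
  rw [← Ico_add_one_add_one_eq_Ioc, sum_Ico_eq_sum_range, Nat.add_sub_add_right,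
    ← sum_range_add_one_eq_choose_two, ← sum_range_reflect]
  exact sum_congr rfl fun i hi => by rw [mem_range] at hi; omega

def tent (s m t j : ℕ) : ℕ :=
  if j < m then j - s + 1 else if j = m then (m - s + 1) * (t - m + 1) else t + 1 - j

theorem sum_tent {s m t : ℕ} (hsm : s ≤ m) (hmt : m ≤ t) :
    ∑ j ∈ Icc s t, tent s m t j = (t - s + 2).choose 2 := by
  have hsplit : Icc s t = Ico s m ∪ insert m (Ioc m t) := by
    ext j; simp only [mem_union, mem_insert, mem_Icc, mem_Ico, mem_Ioc]; omega
  have hdisj : Disjoint (Ico s m) (insert m (Ioc m t)) := by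
    simp only [disjoint_left, mem_Ico, mem_insert, mem_Ioc]; omega
  rw [hsplit, sum_union hdisj, sum_insert (by simp),
    show t - s + 2 = (m - s + 1) + (t - m + 1) by omega, Nat.add_choose_two,
    ← sum_Ico_sub_add_one_eq_choose_two, ← sum_Ioc_add_one_sub_eq_choose_two]
  have hleft : ∀ j ∈ Ico s m, tent s m t j = j - s + 1 := fun j hj => by
    rw [mem_Ico] at hj; simp [tent, hj.2]
  have hright : ∀ j ∈ Ioc m t, tent s m t j = t + 1 - j := fun j hj => by
    rw [mem_Ioc] at hj; simp [tent, hj.1.not_gt, hj.1.ne']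
  rw [sum_congr rfl hleft, sum_congr rfl hright, tent, if_neg (lt_irrefl m), if_pos rfl]
  ring

theorem tent_le_tent {S s t T v j : ℕ} (hSs : S ≤ s) (htT : t ≤ T) (hSv : S ≤ v)
    (hvT : v ≤ T) (hsj : s ≤ j) (hjt : j ≤ t) :
    tent s (max s (min v t)) t j ≤ tent S v T j := by
  set m := max s (min v t)
  have hpeak : (m - s + 1) * (t - m + 1) ≤ tent S v T m := by
    rcases lt_or_ge v s with hvs | hsv
    · rw [show m = s by omega, tent, if_neg (by omega), if_neg (by omega), Nat.sub_self, zero_add,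
      one_mul]
      omega
    rcases le_or_gt v t with hvt | htv
    · rw [show m = v by omega, tent, if_neg (lt_irrefl v), if_pos rfl]
      exact Nat.mul_le_mul (by omega) (by omega)
    · rw [show m = t by omega, tent, if_pos htv, Nat.sub_self, zero_add, mul_one]
      omega
  rcases lt_trichotomy j m with hjm | hjm | hmj
  · rw [tent, if_pos hjm, tent, if_pos (by omega)]
    omega
  · rwa [hjm, tent, if_neg (lt_irrefl m), if_pos rfl]
  · rw [tent, if_neg (by omega), if_neg (by omega), tent, if_neg (by omega), if_neg (by omega)]
    omega

theorem explicit_perfect_matching_sequence (k v : ℕ) (hv : 1 ≤ v) (hvk : v ≤ k - 1)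
    (b : ℕ → ℕ)
    (hb : ∀ j, 1 ≤ j → j ≤ k - 1 →
      b j = if j < v then j else if j = v then v * (k - v) else k - j) :
    (∀ s t, 1 ≤ s → s ≤ t → t ≤ k - 1 →
        (t - s + 2).choose 2 ≤ ∑ j ∈ Finset.Icc s t, b j) ∧
      ∑ j ∈ Finset.Icc 1 (k - 1), b j = k.choose 2 := by
  have hb_tent : ∀ j ∈ Icc 1 (k - 1), b j = tent 1 v (k - 1) j := fun j hj => by
    rw [mem_Icc] at hj
    rw [hb j hj.1 hj.2, tent, show v - 1 + 1 = v by omega, show k - 1 - v + 1 = k - v by omega]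
    split_ifs <;> omega
  refine ⟨fun s t hs hst htk => ?_, ?_⟩
  · rw [← sum_tent (le_max_left s (min v t)) (max_le hst (min_le_right v t))]
    refine sum_le_sum fun j hj => ?_
    rw [mem_Icc] at hj
    rw [hb_tent j (mem_Icc.2 ⟨by omega, by omega⟩)]
    exact tent_le_tent hs htk hv hvk hj.1 hj.2
  · rw [sum_congr rfl hb_tent, sum_tent hv hvk]
    congr 1
    omega
end

section
/- For variables α_1,...,α_k, the Schur polynomial s_λ(α) for the staircase partition λ = (k-1, k-2, ..., 1, 0) equals ∏_{1 ≤ i < j ≤ k} (α_i + α_j). -/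
/-!
Since `X_j ^ (2 (k - 1 - i)) = (X_j ^ 2) ^ (k - 1 - i)`, the matrix is a transposed Vandermonde
matrix in the squares `X_j ^ 2`, with its rows in decreasing degree, so its determinant is
`∏_{i<j} (X_i ^ 2 - X_j ^ 2) = ∏_{i<j} (X_i - X_j) (X_i + X_j)`.
-/

open Finset MvPolynomial

theorem Finset.prod_filter_lt_eq_prod_prod_Ioi {α M : Type*} [Fintype α] [LinearOrder α]
    [LocallyFiniteOrderTop α] [CommMonoid M] (f : α → α → M) :
    ∏ q ∈ univ.filter (fun q : α × α => q.1 < q.2), f q.1 q.2 = ∏ i, ∏ j ∈ Ioi i, f i j :=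
  prod_finset_product' _ _ _ (by simp)

theorem Matrix.det_of_pow_rev_eq_prod_sub {R : Type*} [CommRing R] {n : ℕ} (v : Fin n → R) :
    (Matrix.of fun i j : Fin n => v j ^ (n - 1 - (i : ℕ))).det =
      ∏ i, ∏ j ∈ Ioi i, (v i - v j) := by
  have h : (Matrix.of fun i j : Fin n => v j ^ (n - 1 - (i : ℕ))) =
      (projVandermonde 1 v).transpose := by
    ext i j
    simp [projVandermonde_apply, Fin.val_rev, Nat.sub_sub, add_comm]
  simp [h, det_projVandermonde]

theorem schur_staircase_general (k : ℕ) :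
    Matrix.det (Matrix.of fun i j : Fin k =>
        (MvPolynomial.X j : MvPolynomial (Fin k) ℤ) ^ (2 * (k - 1 - (i : ℕ)))) =
      (∏ q ∈ Finset.univ.filter (fun q : Fin k × Fin k => q.1 < q.2),
          (MvPolynomial.X q.1 - MvPolynomial.X q.2)) *
        ∏ q ∈ Finset.univ.filter (fun q : Fin k × Fin k => q.1 < q.2),
          (MvPolynomial.X q.1 + MvPolynomial.X q.2) := by
  simp_rw [pow_mul]
  rw [Matrix.det_of_pow_rev_eq_prod_sub (fun j => X j ^ 2), ← prod_mul_distrib,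
    prod_filter_lt_eq_prod_prod_Ioi fun i j => (X i - X j) * (X i + X j)]
  exact prod_congr rfl fun i _ => prod_congr rfl fun j _ => by ring

theorem schur_staircase (k : ℕ) (hk : 1 ≤ k) :
    Matrix.det (Matrix.of fun i j : Fin k =>
        (MvPolynomial.X j : MvPolynomial (Fin k) ℤ) ^ (2 * (k - 1 - (i : ℕ)))) =
      (∏ q ∈ Finset.univ.filter (fun q : Fin k × Fin k => q.1 < q.2),
          (MvPolynomial.X q.1 - MvPolynomial.X q.2)) *
        ∏ q ∈ Finset.univ.filter (fun q : Fin k × Fin k => q.1 < q.2),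
          (MvPolynomial.X q.1 + MvPolynomial.X q.2) :=
  schur_staircase_general k
end
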